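/- arXiv:2403.01190 — 2 statements merged into one kernel-verified Lean document; each statement's English description precedes it below -/
import Mathlib

section
/- Let n ≥ 3 and let A be the generalized Cartan matrix of affine type D^{(2)}_{n} on I = {1,…,n} (a_{1,2} = −2, a_{2,1} = −1, a_{i,i+1} = a_{i+1,i} = −1 for 2 ≤ i ≤ n−2, a_{n−1,n} = −1, a_{n,n−1} = −2, all other off-diagonal entries 0). Let ι satisfy (seq-con) and be adapted to A, fix k with 1 < k < n and nonnegative integers λ_j (j ∈ I). For i,j ∈ I with a_{i,j} < 0 put p_{i,j} = 1 if the first occurrence of i in ι precedes the first occurrence of j, and p_{i,j} = 0 otherwise. Let π : ℤ_{≥1} → I be the map of period 2n−2 with π(ℓ) = ℓ for 1 ≤ ℓ ≤ n and π(2n−ℓ) = ℓ for 2 ≤ ℓ ≤ n−1. Suppose either (a) the first occurrence of k+1 in ι precedes that of k and the first occurrence of k precedes that of k−1, in which case set K = k; or (b) the first occurrence of k−1 precedes that of k and the first occurrence of k precedes that of k+1, in which case set K = 2n−k. Define P_K(K) = 0 and P_K(t) = P_K(t−1) + p_{π(t),π(t−1)} for integers t > K, and for r ≥ K+1 put F_r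 = x_{P_K(r),π(r)} − x_{1+P_K(r−1),π(r−1)} + λ_k, where x_{s,j} denotes the coordinate function x_m at the position m of the s-th occurrence of j in ι. Then the smallest set of affine functions containing λ^{(k)} and stable under all operators Ŝ'_r equals {F_r : r ∈ ℤ, r ≥ K+1} ∪ {0}; in particular λ^{(k)} = F_{K+1}. -/
noncomputable section

open Finsupp

/-- `r⁺`: the least `m > r` with `ι m = ι r`. -/
def rPlus (ι : ℕ → ℕ) (r : ℕ) : ℕ := sInf {m | r < m ∧ ι m = ι r}

/-- `r⁻`: the greatest `m` with `1 ≤ m < r` and `ι m = ι r`, or `0` if none. -/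
def rMinus (ι : ℕ → ℕ) (r : ℕ) : ℕ := sSup {m | 1 ≤ m ∧ m < r ∧ ι m = ι r}

/-- The linear form `β_r = x_r + Σ_{r<m<r⁺} a_{i_r,i_m} x_m + x_{r⁺}`, with `β_0 = 0`. -/
def betaForm (A : ℕ → ℕ → ℤ) (ι : ℕ → ℕ) (r : ℕ) : ℕ →₀ ℚ :=
  if r = 0 then 0
  else Finsupp.single r 1 + Finsupp.single (rPlus ι r) 1 +
    ∑ m ∈ Finset.Ioo r (rPlus ι r), (A (ι r) (ι m) : ℚ) • Finsupp.single m 1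

/-- The operator `S'_r` on linear forms. -/
def Sop (A : ℕ → ℕ → ℤ) (ι : ℕ → ℕ) (r : ℕ) (φ : ℕ →₀ ℚ) : ℕ →₀ ℚ :=
  if 0 < φ r then φ - betaForm A ι r
  else if φ r < 0 then φ + betaForm A ι (rMinus ι r)
  else φ

/-- `Ξ'_ι`: the smallest set of linear forms containing each `x_j` (`j ≥ 1`)
and stable under every `S'_r` (`r ≥ 1`). -/
inductive XiMem (A : ℕ → ℕ → ℤ) (ι : ℕ → ℕ) : (ℕ →₀ ℚ) → Prop
  | coord (j : ℕ) (hj : 1 ≤ j) : XiMem A ι (Finsupp.single j 1)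
  | step (r : ℕ) (hr : 1 ≤ r) (φ : ℕ →₀ ℚ) (h : XiMem A ι φ) : XiMem A ι (Sop A ι r φ)

/-- Condition (seq-con): `ι` takes values in `{1,…,n}`, has no equal consecutive terms,
and every letter occurs infinitely often. -/
def SeqCon (n : ℕ) (ι : ℕ → ℕ) : Prop :=
  (∀ r, 1 ≤ r → 1 ≤ ι r ∧ ι r ≤ n) ∧
  (∀ r, 1 ≤ r → ι r ≠ ι (r + 1)) ∧
  (∀ k, 1 ≤ k → k ≤ n → ∀ N : ℕ, ∃ r, N ≤ r ∧ 1 ≤ r ∧ ι r = k)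

/-- `ι` is adapted to `A`: for `i ≠ j` with `a_{i,j} < 0`, consecutive members of the
subsequence of `ι` consisting of the letters `i`, `j` are distinct. -/
def Adapted (n : ℕ) (A : ℕ → ℕ → ℤ) (ι : ℕ → ℕ) : Prop :=
  ∀ i j, 1 ≤ i → i ≤ n → 1 ≤ j → j ≤ n → i ≠ j → A i j < 0 →
    ∀ r s, 1 ≤ r → r < s → (ι r = i ∨ ι r = j) → (ι s = i ∨ ι s = j) →
      (∀ m, r < m → m < s → ι m ≠ i ∧ ι m ≠ j) → ι r ≠ ι s

/-- The `Ξ'`-positivity condition. -/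
def XiPositivity (A : ℕ → ℕ → ℤ) (ι : ℕ → ℕ) : Prop :=
  ∀ φ : ℕ →₀ ℚ, XiMem A ι φ → ∀ ℓ, 1 ≤ ℓ → rMinus ι ℓ = 0 → 0 ≤ φ ℓ

/-- `ι^{(k)}`: the first position `r ≥ 1` with `ι r = k`. -/
def iotaFirst (ι : ℕ → ℕ) (k : ℕ) : ℕ := sInf {r | 1 ≤ r ∧ ι r = k}

/-- The affine function `λ^{(k)} = λ_k − Σ_{1 ≤ j < ι^{(k)}} a_{k,i_j} x_j − x_{ι^{(k)}}`,
represented as a pair (constant term, linear part). -/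
def lamForm (A : ℕ → ℕ → ℤ) (ι : ℕ → ℕ) (lam : ℕ → ℕ) (k : ℕ) : ℚ × (ℕ →₀ ℚ) :=
  ((lam k : ℚ),
    -(∑ j ∈ Finset.Ico 1 (iotaFirst ι k), (A k (ι j) : ℚ) • Finsupp.single j 1)
      - Finsupp.single (iotaFirst ι k) 1)

/-- `β_r^{(−)}`, as an affine function. -/
def betaMinusHat (A : ℕ → ℕ → ℤ) (ι : ℕ → ℕ) (lam : ℕ → ℕ) (r : ℕ) : ℚ × (ℕ →₀ ℚ) :=
  if rMinus ι r ≠ 0 then ((0 : ℚ), betaForm A ι (rMinus ι r))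
  else (-(lam (ι r) : ℚ),
    (∑ j ∈ Finset.Ico 1 r, (A (ι r) (ι j) : ℚ) • Finsupp.single j 1) + Finsupp.single r 1)

/-- The operator `Ŝ'_r` on affine functions. -/
def ShatOp (A : ℕ → ℕ → ℤ) (ι : ℕ → ℕ) (lam : ℕ → ℕ) (r : ℕ)
    (φ : ℚ × (ℕ →₀ ℚ)) : ℚ × (ℕ →₀ ℚ) :=
  if 0 < φ.2 r then φ - ((0 : ℚ), betaForm A ι r)
  else if φ.2 r < 0 then φ + betaMinusHat A ι lam r
  else φ

/-- `Ξ'_ι[λ]`: the smallest set of affine functions containing each `x_j` (`j ≥ 1`)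
and each `λ^{(k)}` (`k ∈ I`), stable under every `Ŝ'_r` (`r ≥ 1`). -/
inductive XiLamMem (n : ℕ) (A : ℕ → ℕ → ℤ) (ι : ℕ → ℕ) (lam : ℕ → ℕ) :
    ℚ × (ℕ →₀ ℚ) → Prop
  | coord (j : ℕ) (hj : 1 ≤ j) : XiLamMem n A ι lam ((0 : ℚ), Finsupp.single j 1)
  | lamk (k : ℕ) (hk1 : 1 ≤ k) (hkn : k ≤ n) : XiLamMem n A ι lam (lamForm A ι lam k)
  | step (r : ℕ) (hr : 1 ≤ r) (φ : ℚ × (ℕ →₀ ℚ)) (h : XiLamMem n A ι lam φ) :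
      XiLamMem n A ι lam (ShatOp A ι lam r φ)

/-- The pair `(ι,λ)` is `Ξ'`-ample: every element of `Ξ'_ι[λ]` has nonnegative constant term. -/
def XiAmple (n : ℕ) (A : ℕ → ℕ → ℤ) (ι : ℕ → ℕ) (lam : ℕ → ℕ) : Prop :=
  ∀ φ : ℚ × (ℕ →₀ ℚ), XiLamMem n A ι lam φ → 0 ≤ φ.1

/-- The GCM of type `D^{(2)}_{n}` on `{1,…,n}`. -/
def CartanD2 (n : ℕ) (A : ℕ → ℕ → ℤ) : Prop :=
  (∀ i, 1 ≤ i → i ≤ n → A i i = 2) ∧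
  A 1 2 = -2 ∧ A 2 1 = -1 ∧
  (∀ i, 2 ≤ i → i + 2 ≤ n → A i (i + 1) = -1 ∧ A (i + 1) i = -1) ∧
  A (n - 1) n = -1 ∧ A n (n - 1) = -2 ∧
  (∀ i j, 1 ≤ i → i ≤ n → 1 ≤ j → j ≤ n → i ≠ j →
    ¬(j = i + 1 ∨ i = j + 1) → A i j = 0)

/-- `p_{i,j} = 1` if the first occurrence of `i` in `ι` precedes that of `j`, else `0`. -/
def pOcc (ι : ℕ → ℕ) (i j : ℕ) : ℕ :=
  if iotaFirst ι i < iotaFirst ι j then 1 else 0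

/-- The map `π : ℤ_{≥1} → {1,…,n}` of period `2n−2` with `π(ℓ) = ℓ` for `1 ≤ ℓ ≤ n`
and `π(2n−ℓ) = ℓ` for `2 ≤ ℓ ≤ n−1`. -/
def piC (n t : ℕ) : ℕ :=
  let m := (t - 1) % (2 * n - 2) + 1
  if m ≤ n then m else 2 * n - m

/-- `P_K(t) = Σ_{K < m ≤ t} p_{π(m),π(m−1)}`, i.e. the solution of `P_K(K) = 0`,
`P_K(t) = P_K(t−1) + p_{π(t),π(t−1)}` for `t > K`. -/
def Pfun (n : ℕ) (ι : ℕ → ℕ) (K t : ℕ) : ℕ :=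
  ∑ m ∈ Finset.Icc (K + 1) t, pOcc ι (piC n m) (piC n (m - 1))

/-- The position of the `s`-th occurrence of the letter `j` in `ι`. -/
def occPos (ι : ℕ → ℕ) (j s : ℕ) : ℕ :=
  sInf {r | 1 ≤ r ∧ ι r = j ∧ ((Finset.Icc 1 r).filter (fun m => ι m = j)).card = s}

/-- The coordinate function `x_{s,j}` (zero if `s = 0`). -/
def xsj (ι : ℕ → ℕ) (s j : ℕ) : ℕ →₀ ℚ :=
  if s = 0 then 0 else Finsupp.single (occPos ι j s) 1

/-- The affine function `F_r = x_{P_K(r),π(r)} − x_{1+P_K(r−1),π(r−1)} + λ_k`. -/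
def Fbox (n : ℕ) (ι : ℕ → ℕ) (lam : ℕ → ℕ) (k K r : ℕ) : ℚ × (ℕ →₀ ℚ) :=
  ((lam k : ℚ),
    xsj ι (Pfun n ι K r) (piC n r) - xsj ι (1 + Pfun n ι K (r - 1)) (piC n (r - 1)))

/-- The smallest set of affine functions containing `λ^{(k)}` and stable under
every `Ŝ'_r` (`r ≥ 1`). -/
inductive XiLamKMem (A : ℕ → ℕ → ℤ) (ι : ℕ → ℕ) (lam : ℕ → ℕ) (k : ℕ) :
    ℚ × (ℕ →₀ ℚ) → Prop
  | base : XiLamKMem A ι lam k (lamForm A ι lam k)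
  | step (r : ℕ) (hr : 1 ≤ r) (φ : ℚ × (ℕ →₀ ℚ)) (h : XiLamKMem A ι lam k φ) :
      XiLamKMem A ι lam k (ShatOp A ι lam r φ)



def cnt (ι : ℕ → ℕ) (j r : ℕ) : ℕ := ((Finset.Icc 1 r).filter (fun m => ι m = j)).card

lemma cnt_zero (ι : ℕ → ℕ) (j : ℕ) : cnt ι j 0 = 0 := by
  simp [cnt]

lemma cnt_succ (ι : ℕ → ℕ) (j r : ℕ) :
    cnt ι j (r + 1) = cnt ι j r + if ι (r + 1) = j then 1 else 0 := by
  unfold cnt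
  have h : Finset.Icc 1 (r + 1) = insert (r + 1) (Finset.Icc 1 r) := by
    ext m; simp [Finset.mem_Icc, Finset.mem_insert]; omega
  rw [h, Finset.filter_insert]
  by_cases h2 : ι (r+1) = j
  · rw [if_pos h2, if_pos h2, Finset.card_insert_of_notMem (by simp [Finset.mem_Icc])]
  · rw [if_neg h2, if_neg h2]; simp

lemma cnt_mono (ι : ℕ → ℕ) (j : ℕ) {r s : ℕ} (h : r ≤ s) : cnt ι j r ≤ cnt ι j s := by
  apply Finset.card_le_card
  intro m hm
  simp only [Finset.mem_filter, Finset.mem_Icc] at *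
  omega

lemma cnt_lt (ι : ℕ → ℕ) {j r s : ℕ} (hs : ι s = j) (hrs : r < s) :
    cnt ι j r < cnt ι j s := by
  apply Finset.card_lt_card
  constructor
  · intro m hm; simp only [Finset.mem_filter, Finset.mem_Icc] at *; omega
  · intro hsub
    have := hsub (by simp only [Finset.mem_filter, Finset.mem_Icc]; exact ⟨⟨by omega, le_rfl⟩, hs⟩)
    simp only [Finset.mem_filter, Finset.mem_Icc] at this; omega

lemma cnt_pos_occ (ι : ℕ → ℕ) {j r : ℕ} (hr : 1 ≤ r) (h : ι r = j) : 1 ≤ cnt ι j r := by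
  have := cnt_lt ι h (show r - 1 < r by omega)
  omega

lemma cnt_const (ι : ℕ → ℕ) {j r u : ℕ} (hru : r ≤ u)
    (h : ∀ x, r < x → x ≤ u → ι x ≠ j) : cnt ι j u = cnt ι j r := by
  induction u, hru using Nat.le_induction with
  | base => rfl
  | succ m hm ih =>
      rw [cnt_succ, if_neg (h (m+1) (by omega) le_rfl)]
      simp [ih (fun x hx hxu => h x hx (by omega))]

def Hinf (ι : ℕ → ℕ) (j : ℕ) : Prop := ∀ N : ℕ, ∃ r, N ≤ r ∧ 1 ≤ r ∧ ι r = j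

section OccBasic
variable {ι : ℕ → ℕ} {j : ℕ}

/-- existence of positions with any given count -/
lemma exists_cnt (hinf : Hinf ι j) (s : ℕ) (hs : 1 ≤ s) :
    ∃ r, 1 ≤ r ∧ ι r = j ∧ cnt ι j r = s := by
  induction s with
  | zero => omega
  | succ s ih =>
      -- get a position with cnt = s (r = 0 works when s = 0)
      obtain ⟨r, hr⟩ : ∃ r, cnt ι j r = s := by
        rcases Nat.eq_or_lt_of_le hs with h | h
        · exact ⟨0, by rw [cnt_zero]; omega⟩
        · obtain ⟨r, _, _, hcnt⟩ := ih (by omega); exact ⟨r, hcnt⟩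
      have hne : {m | r < m ∧ ι m = j}.Nonempty := by
        obtain ⟨m, hm1, _, hm3⟩ := hinf (r+1)
        exact ⟨m, by omega, hm3⟩
      set m := sInf {m | r < m ∧ ι m = j} with hm
      have hmem : r < m ∧ ι m = j := Nat.sInf_mem hne
      have hmin : ∀ x, r < x → x < m → ι x ≠ j := by
        intro x hx1 hx2 hxj
        exact absurd (Nat.sInf_le (show x ∈ {m | r < m ∧ ι m = j} from ⟨hx1, hxj⟩)) (by omega)
      refine ⟨m, by omega, hmem.2, ?_⟩
      have h1 : cnt ι j (m - 1) = cnt ι j r :=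
        cnt_const ι (by omega) (fun x hx hxu => hmin x hx (by omega))
      have h2 : cnt ι j m = cnt ι j (m-1) + if ι m = j then 1 else 0 := by
        have : m - 1 + 1 = m := by omega
        rw [← this, cnt_succ]; rw [this]
      rw [h2, if_pos hmem.2, h1, hr]

lemma occPos_spec (hinf : Hinf ι j) (s : ℕ) (hs : 1 ≤ s) :
    1 ≤ occPos ι j s ∧ ι (occPos ι j s) = j ∧ cnt ι j (occPos ι j s) = s := by
  have hne : {r | 1 ≤ r ∧ ι r = j ∧ ((Finset.Icc 1 r).filter (fun m => ι m = j)).card = s}.Nonempty := by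
    obtain ⟨r, h1, h2, h3⟩ := exists_cnt hinf s hs
    exact ⟨r, h1, h2, h3⟩
  exact Nat.sInf_mem hne

lemma occ_unique (hinf : Hinf ι j) {r r' : ℕ} (hr : 1 ≤ r) (hr' : 1 ≤ r') (h1 : ι r = j) (h2 : ι r' = j)
    (h : cnt ι j r = cnt ι j r') : r = r' := by
  rcases lt_trichotomy r r' with h' | h' | h'
  · exact absurd (cnt_lt ι h2 h') (by omega)
  · exact h'
  · exact absurd (cnt_lt ι h1 h') (by omega)

lemma occPos_cnt (hinf : Hinf ι j) {r : ℕ} (hr : 1 ≤ r) (h : ι r = j) : occPos ι j (cnt ι j r) = r := by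
  have hs : 1 ≤ cnt ι j r := cnt_pos_occ ι hr h
  obtain ⟨h1, h2, h3⟩ := occPos_spec hinf (cnt ι j r) hs
  exact occ_unique hinf h1 hr h2 h (by rw [h3])

lemma occPos_le_iff (hinf : Hinf ι j) {s r : ℕ} (hs : 1 ≤ s) : occPos ι j s ≤ r ↔ s ≤ cnt ι j r := by
  obtain ⟨h1, h2, h3⟩ := occPos_spec hinf s hs
  constructor
  · intro h; calc s = cnt ι j (occPos ι j s) := h3.symm
      _ ≤ cnt ι j r := cnt_mono ι j h
  · intro h
    by_contra hlt
    push_neg at hlt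
    have := cnt_lt ι h2 hlt
    omega

lemma occPos_lt_iff (hinf : Hinf ι j) {s r : ℕ} (hs : 1 ≤ s) : r < occPos ι j s ↔ cnt ι j r < s := by
  have := occPos_le_iff hinf (r := r) hs
  omega

lemma occPos_mono (hinf : Hinf ι j) {s t : ℕ} (hs : 1 ≤ s) (hst : s ≤ t) : occPos ι j s ≤ occPos ι j t := by
  have h3 := (occPos_spec hinf t (by omega)).2.2
  rw [occPos_le_iff hinf hs, h3]; exact hst

lemma occPos_strict_mono (hinf : Hinf ι j) {s t : ℕ} (hs : 1 ≤ s) (hst : s < t) : occPos ι j s < occPos ι j t := by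
  have h3 := (occPos_spec hinf s hs).2.2
  rw [occPos_lt_iff hinf (by omega), h3]; exact hst

lemma rPlus_occPos (hinf : Hinf ι j) {s : ℕ} (hs : 1 ≤ s) : rPlus ι (occPos ι j s) = occPos ι j (s + 1) := by
  obtain ⟨h1, h2, h3⟩ := occPos_spec hinf s hs
  obtain ⟨g1, g2, g3⟩ := occPos_spec hinf (s+1) (by omega)
  have hmem : occPos ι j (s+1) ∈ {m | occPos ι j s < m ∧ ι m = ι (occPos ι j s)} := by
    refine ⟨occPos_strict_mono hinf hs (by omega), by rw [g2, h2]⟩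
  apply le_antisymm (Nat.sInf_le hmem)
  apply le_csInf ⟨_, hmem⟩
  intro m hm
  obtain ⟨hm1, hm2⟩ := hm
  rw [h2] at hm2
  have : s + 1 ≤ cnt ι j m := by have := cnt_lt ι hm2 hm1; omega
  rw [← occPos_le_iff hinf (by omega)] at this
  exact this

lemma rMinus_occPos (hinf : Hinf ι j) {s : ℕ} (hs : 1 ≤ s) : rMinus ι (occPos ι j (s+1)) = occPos ι j s := by
  obtain ⟨h1, h2, h3⟩ := occPos_spec hinf s hs
  obtain ⟨g1, g2, g3⟩ := occPos_spec hinf (s+1) (by omega)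
  have hgreat : IsGreatest {m | 1 ≤ m ∧ m < occPos ι j (s+1) ∧ ι m = ι (occPos ι j (s+1))}
      (occPos ι j s) := by
    constructor
    · exact ⟨h1, occPos_strict_mono hinf hs (by omega), by rw [h2, g2]⟩
    · rintro m ⟨hm1, hm2, hm3⟩
      rw [g2] at hm3
      have hc : cnt ι j m ≤ s := by have := cnt_lt ι g2 hm2; omega
      have := occPos_cnt hinf hm1 hm3
      calc m = occPos ι j (cnt ι j m) := this.symm
        _ ≤ occPos ι j s := occPos_mono hinf (cnt_pos_occ ι hm1 hm3) hc
  exact hgreat.csSup_eq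

lemma rMinus_occPos_one (hinf : Hinf ι j) : rMinus ι (occPos ι j 1) = 0 := by
  obtain ⟨h1, h2, h3⟩ := occPos_spec hinf 1 le_rfl
  have : {m | 1 ≤ m ∧ m < occPos ι j 1 ∧ ι m = ι (occPos ι j 1)} = ∅ := by
    ext m
    simp only [Set.mem_setOf_eq, Set.mem_empty_iff_false, iff_false]
    rintro ⟨hm1, hm2, hm3⟩
    rw [h2] at hm3
    have : 1 ≤ cnt ι j m := cnt_pos_occ ι hm1 hm3
    rw [← occPos_le_iff hinf le_rfl] at this
    omega
  rw [rMinus, this]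
  exact csSup_empty

lemma iotaFirst_eq_occPos (hinf : Hinf ι j) : iotaFirst ι j = occPos ι j 1 := by
  obtain ⟨h1, h2, h3⟩ := occPos_spec hinf 1 le_rfl
  have hmem : occPos ι j 1 ∈ {r | 1 ≤ r ∧ ι r = j} := ⟨h1, h2⟩
  apply le_antisymm (Nat.sInf_le hmem)
  apply le_csInf ⟨_, hmem⟩
  rintro m ⟨hm1, hm2⟩
  rw [occPos_le_iff hinf le_rfl]
  exact cnt_pos_occ ι hm1 hm2

lemma no_occ_between (hinf : Hinf ι j) {s m : ℕ} (hs : 1 ≤ s) (hm : ι m = j)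
    (h1 : occPos ι j s < m) (h2 : m < occPos ι j (s+1)) : False := by
  have a1 : s + 1 ≤ cnt ι j m := by
    have := cnt_lt ι hm h1; have := (occPos_spec hinf s hs).2.2; omega
  have a2 : cnt ι j m < s + 1 := by
    have := cnt_lt ι (occPos_spec hinf (s+1) (by omega)).2.1 h2
    have := (occPos_spec hinf (s+1) (by omega)).2.2; omega
  omega

end OccBasic

def AltProp (ι : ℕ → ℕ) (i j : ℕ) : Prop :=
  ∀ r s, 1 ≤ r → r < s → (ι r = i ∨ ι r = j) → (ι s = i ∨ ι s = j) →
    (∀ m, r < m → m < s → ι m ≠ i ∧ ι m ≠ j) → ι r ≠ ι s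

def LastIs (ι : ℕ → ℕ) (i j x r : ℕ) : Prop :=
  ∃ m, 1 ≤ m ∧ m ≤ r ∧ ι m = x ∧ ∀ m', m < m' → m' ≤ r → ι m' ≠ i ∧ ι m' ≠ j

section Pair
variable {ι : ℕ → ℕ} {i j : ℕ}

lemma pair_invariant (hij : i ≠ j) (halt : AltProp ι i j)
    (hfirst : occPos ι i 1 < occPos ι j 1) (hinfi : Hinf ι i) (hinfj : Hinf ι j) :
    ∀ r, (cnt ι i r = cnt ι j r + 1 ∧ LastIs ι i j i r) ∨
      (cnt ι i r = cnt ι j r ∧ (1 ≤ cnt ι j r → LastIs ι i j j r)) := by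
  intro r
  induction r with
  | zero => right; rw [cnt_zero, cnt_zero]; exact ⟨rfl, by omega⟩
  | succ r ih =>
      by_cases hi : ι (r+1) = i
      · have hnj : ι (r+1) ≠ j := by rw [hi]; exact hij
        rcases ih with ⟨hc, m, hm1, hm2, hm3, hm4⟩ | ⟨hc, hlast⟩
        · -- two i's in a row in the subsequence: contradiction
          exact absurd (halt m (r+1) hm1 (by omega) (Or.inl hm3) (Or.inl hi)
            (fun m' h1 h2 => hm4 m' h1 (by omega))) (by simp [hm3, hi])
        · left
          constructor
          · rw [cnt_succ, cnt_succ, if_pos hi, if_neg hnj]; omega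
          · exact ⟨r+1, by omega, le_rfl, hi, fun m' h1 h2 => by omega⟩
      · by_cases hj : ι (r+1) = j
        · rcases ih with ⟨hc, hlast⟩ | ⟨hc, hlast⟩
          · right
            constructor
            · rw [cnt_succ, cnt_succ, if_pos hj, if_neg hi]; omega
            · exact fun _ => ⟨r+1, by omega, le_rfl, hj, fun m' h1 h2 => by omega⟩
          · by_cases hcz : 1 ≤ cnt ι j r
            · obtain ⟨m, hm1, hm2, hm3, hm4⟩ := hlast hcz
              exact absurd (halt m (r+1) hm1 (by omega) (Or.inr hm3) (Or.inr hj)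
                (fun m' h1 h2 => hm4 m' h1 (by omega))) (by simp [hm3, hj])
            · -- first pair letter would be j, contradicting hfirst
              exfalso
              have hcj : cnt ι j (r+1) = 1 := by rw [cnt_succ, if_pos hj]; omega
              have hci : cnt ι i (r+1) = 0 := by rw [cnt_succ, if_neg hi]; omega
              have h1 : occPos ι j 1 ≤ r + 1 := by rw [occPos_le_iff hinfj le_rfl]; omega
              have h2 : r + 1 < occPos ι i 1 := by rw [occPos_lt_iff hinfi le_rfl]; omega
              omega
        · rcases ih with ⟨hc, m, hm1, hm2, hm3, hm4⟩ | ⟨hc, hlast⟩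
          · left
            refine ⟨by rw [cnt_succ, cnt_succ, if_neg hi, if_neg hj]; omega,
              m, hm1, by omega, hm3, fun m' h1 h2 => ?_⟩
            rcases Nat.lt_or_ge m' (r+1) with h | h
            · exact hm4 m' h1 (by omega)
            · have : m' = r + 1 := by omega
              rw [this]; exact ⟨hi, hj⟩
          · right
            refine ⟨by rw [cnt_succ, cnt_succ, if_neg hi, if_neg hj]; omega, fun hcz => ?_⟩
            have hcz' : 1 ≤ cnt ι j r := by rw [cnt_succ, if_neg hj] at hcz; omega
            obtain ⟨m, hm1, hm2, hm3, hm4⟩ := hlast hcz'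
            refine ⟨m, hm1, by omega, hm3, fun m' h1 h2 => ?_⟩
            rcases Nat.lt_or_ge m' (r+1) with h | h
            · exact hm4 m' h1 (by omega)
            · have : m' = r + 1 := by omega
              rw [this]; exact ⟨hi, hj⟩

/-- At a position carrying the letter `i` (the first letter of the pair),
the count of `i` exceeds that of `j` by one. -/
lemma cnt_at_first (hij : i ≠ j) (halt : AltProp ι i j)
    (hfirst : occPos ι i 1 < occPos ι j 1) (hinfi : Hinf ι i) (hinfj : Hinf ι j)
    {r : ℕ} (hr : 1 ≤ r) (h : ι r = i) : cnt ι i r = cnt ι j r + 1 := by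
  rcases pair_invariant hij halt hfirst hinfi hinfj r with ⟨hc, _⟩ | ⟨hc, hlast⟩
  · exact hc
  · exfalso
    have hcz : 1 ≤ cnt ι j r := by
      have : 1 ≤ cnt ι i r := cnt_pos_occ ι hr h
      omega
    obtain ⟨m, hm1, hm2, hm3, hm4⟩ := hlast hcz
    rcases Nat.lt_or_ge m r with hlt | hge
    · exact (hm4 r hlt le_rfl).1 h
    · have : m = r := by omega
      rw [this, h] at hm3; exact hij hm3

/-- At a position carrying the letter `j` (the second letter of the pair),
the counts agree. -/
lemma cnt_at_second (hij : i ≠ j) (halt : AltProp ι i j)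
    (hfirst : occPos ι i 1 < occPos ι j 1) (hinfi : Hinf ι i) (hinfj : Hinf ι j)
    {r : ℕ} (hr : 1 ≤ r) (h : ι r = j) : cnt ι i r = cnt ι j r := by
  rcases pair_invariant hij halt hfirst hinfi hinfj r with ⟨hc, m, hm1, hm2, hm3, hm4⟩ | ⟨hc, _⟩
  · exfalso
    rcases Nat.lt_or_ge m r with hlt | hge
    · exact (hm4 r hlt le_rfl).2 h
    · have : m = r := by omega
      rw [this, h] at hm3; exact hij hm3.symm
  · exact hc

lemma interleave_fs (hij : i ≠ j) (halt : AltProp ι i j)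
    (hfirst : occPos ι i 1 < occPos ι j 1) (hinfi : Hinf ι i) (hinfj : Hinf ι j)
    {s : ℕ} (hs : 1 ≤ s) : occPos ι i s < occPos ι j s := by
  obtain ⟨g1, g2, g3⟩ := occPos_spec hinfj s hs
  have h := cnt_at_second hij halt hfirst hinfi hinfj g1 g2
  have hle : occPos ι i s ≤ occPos ι j s := by
    rw [occPos_le_iff hinfi hs]; omega
  rcases Nat.lt_or_ge (occPos ι i s) (occPos ι j s) with h' | h'
  · exact h'
  · exfalso
    have heq : occPos ι i s = occPos ι j s := by omega
    have := (occPos_spec hinfi s hs).2.1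
    rw [heq, g2] at this; exact hij this.symm

lemma interleave_sf (hij : i ≠ j) (halt : AltProp ι i j)
    (hfirst : occPos ι i 1 < occPos ι j 1) (hinfi : Hinf ι i) (hinfj : Hinf ι j)
    {s : ℕ} (hs : 1 ≤ s) : occPos ι j s < occPos ι i (s+1) := by
  obtain ⟨g1, g2, g3⟩ := occPos_spec hinfj s hs
  have h := cnt_at_second hij halt hfirst hinfi hinfj g1 g2
  rw [occPos_lt_iff hinfi (by omega)]; omega

end Pair

section Pair2
variable {ι : ℕ → ℕ} {i j : ℕ}

lemma filter_self_Ioo (hinf : Hinf ι j) {s : ℕ} (hs : 1 ≤ s) :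
    (Finset.Ioo (occPos ι j s) (occPos ι j (s+1))).filter (fun m => ι m = j) = ∅ := by
  ext m
  simp only [Finset.mem_filter, Finset.mem_Ioo, Finset.notMem_empty, iff_false]
  rintro ⟨⟨h1, h2⟩, h3⟩
  exact no_occ_between hinf hs h3 h1 h2

/-- the unique occurrence of the second letter between consecutive occurrences
of the first letter -/
lemma filter_second_Ioo_first (hij : i ≠ j) (halt : AltProp ι i j)
    (hfirst : occPos ι i 1 < occPos ι j 1) (hinfi : Hinf ι i) (hinfj : Hinf ι j)
    {s : ℕ} (hs : 1 ≤ s) :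
    (Finset.Ioo (occPos ι i s) (occPos ι i (s+1))).filter (fun m => ι m = j)
      = {occPos ι j s} := by
  have hc1 : cnt ι j (occPos ι i s) = s - 1 := by
    obtain ⟨g1, g2, g3⟩ := occPos_spec hinfi s hs
    have := cnt_at_first hij halt hfirst hinfi hinfj g1 g2
    omega
  have hc2 : cnt ι j (occPos ι i (s+1)) = s := by
    obtain ⟨g1, g2, g3⟩ := occPos_spec hinfi (s+1) (by omega)
    have := cnt_at_first hij halt hfirst hinfi hinfj g1 g2
    omega
  rw [Finset.eq_singleton_iff_unique_mem]
  constructor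
  · simp only [Finset.mem_filter, Finset.mem_Ioo]
    exact ⟨⟨interleave_fs hij halt hfirst hinfi hinfj hs,
      interleave_sf hij halt hfirst hinfi hinfj hs⟩,
      (occPos_spec hinfj s hs).2.1⟩
  · intro m hm
    simp only [Finset.mem_filter, Finset.mem_Ioo] at hm
    obtain ⟨⟨h1, h2⟩, h3⟩ := hm
    have ha : s ≤ cnt ι j m := by have := cnt_lt ι h3 h1; omega
    have hb : cnt ι j m ≤ s := by have := cnt_mono ι j (le_of_lt h2); omega
    have : cnt ι j m = s := by omega
    rw [← this]
    exact (occPos_cnt hinfj (by omega) h3).symm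

/-- the unique occurrence of the first letter between consecutive occurrences
of the second letter -/
lemma filter_first_Ioo_second (hij : i ≠ j) (halt : AltProp ι i j)
    (hfirst : occPos ι i 1 < occPos ι j 1) (hinfi : Hinf ι i) (hinfj : Hinf ι j)
    {s : ℕ} (hs : 1 ≤ s) :
    (Finset.Ioo (occPos ι j s) (occPos ι j (s+1))).filter (fun m => ι m = i)
      = {occPos ι i (s+1)} := by
  have hc1 : cnt ι i (occPos ι j s) = s := by
    obtain ⟨g1, g2, g3⟩ := occPos_spec hinfj s hs
    have := cnt_at_second hij halt hfirst hinfi hinfj g1 g2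
    omega
  have hc2 : cnt ι i (occPos ι j (s+1)) = s + 1 := by
    obtain ⟨g1, g2, g3⟩ := occPos_spec hinfj (s+1) (by omega)
    have := cnt_at_second hij halt hfirst hinfi hinfj g1 g2
    omega
  rw [Finset.eq_singleton_iff_unique_mem]
  constructor
  · simp only [Finset.mem_filter, Finset.mem_Ioo]
    exact ⟨⟨interleave_sf hij halt hfirst hinfi hinfj hs,
      interleave_fs hij halt hfirst hinfi hinfj (by omega)⟩,
      (occPos_spec hinfi (s+1) (by omega)).2.1⟩
  · intro m hm
    simp only [Finset.mem_filter, Finset.mem_Ioo] at hm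
    obtain ⟨⟨h1, h2⟩, h3⟩ := hm
    have ha : s + 1 ≤ cnt ι i m := by have := cnt_lt ι h3 h1; omega
    have hb : cnt ι i m ≤ s + 1 := by have := cnt_mono ι i (le_of_lt h2); omega
    have : cnt ι i m = s + 1 := by omega
    rw [← this]
    exact (occPos_cnt hinfi (by omega) h3).symm

/-- no occurrence of the second letter before the first occurrence of the first letter -/
lemma filter_second_before_first (hfirst : occPos ι i 1 < occPos ι j 1)
    (hinfj : Hinf ι j) :
    (Finset.Ico 1 (occPos ι i 1)).filter (fun m => ι m = j) = ∅ := by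
  ext m
  simp only [Finset.mem_filter, Finset.mem_Ico, Finset.notMem_empty, iff_false]
  rintro ⟨⟨h1, h2⟩, h3⟩
  have : occPos ι j 1 ≤ m := by
    rw [occPos_le_iff hinfj le_rfl]; exact cnt_pos_occ ι h1 h3
  omega

/-- the unique occurrence of the first letter before the first occurrence of
the second letter -/
lemma filter_first_before_second (hij : i ≠ j) (halt : AltProp ι i j)
    (hfirst : occPos ι i 1 < occPos ι j 1) (hinfi : Hinf ι i) (hinfj : Hinf ι j) :
    (Finset.Ico 1 (occPos ι j 1)).filter (fun m => ι m = i) = {occPos ι i 1} := by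
  have hc : cnt ι i (occPos ι j 1) = 1 := by
    obtain ⟨g1, g2, g3⟩ := occPos_spec hinfj 1 le_rfl
    have := cnt_at_second hij halt hfirst hinfi hinfj g1 g2
    omega
  rw [Finset.eq_singleton_iff_unique_mem]
  constructor
  · simp only [Finset.mem_filter, Finset.mem_Ico]
    exact ⟨⟨(occPos_spec hinfi 1 le_rfl).1, hfirst⟩, (occPos_spec hinfi 1 le_rfl).2.1⟩
  · intro m hm
    simp only [Finset.mem_filter, Finset.mem_Ico] at hm
    obtain ⟨⟨h1, h2⟩, h3⟩ := hm
    have ha : 1 ≤ cnt ι i m := cnt_pos_occ ι h1 h3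
    have hb : cnt ι i m ≤ 1 := by have := cnt_mono ι i (le_of_lt h2); omega
    have : cnt ι i m = 1 := by omega
    rw [← this]
    exact (occPos_cnt hinfi h1 h3).symm

end Pair2

lemma piC_eq (n t : ℕ) : piC n t =
    if (t-1) % (2*n-2) + 1 ≤ n then (t-1) % (2*n-2) + 1 else 2*n - ((t-1) % (2*n-2) + 1) :=
  rfl

lemma piC_bounds {n : ℕ} (hn : 3 ≤ n) (t : ℕ) : 1 ≤ piC n t ∧ piC n t ≤ n := by
  rw [piC_eq]
  have h : (t-1) % (2*n-2) < 2*n-2 := Nat.mod_lt _ (by omega)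
  split_ifs <;> omega

set_option maxHeartbeats 1000000 in
lemma piTriple {n : ℕ} (hn : 3 ≤ n) {t : ℕ} (ht : 2 ≤ t) :
    (piC n t = 1 ∧ piC n (t-1) = 2 ∧ piC n (t+1) = 2) ∨
    (piC n t = n ∧ piC n (t-1) = n-1 ∧ piC n (t+1) = n-1) ∨
    (2 ≤ piC n t ∧ piC n t ≤ n-1 ∧
      ((piC n (t-1) = piC n t - 1 ∧ piC n (t+1) = piC n t + 1) ∨
       (piC n (t-1) = piC n t + 1 ∧ piC n (t+1) = piC n t - 1))) := by
  set L := 2*n-2 with hL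
  have hL4 : 4 ≤ L := by omega
  set q := (t-1) % L with hq
  have hqlt : q < L := Nat.mod_lt _ (by omega)
  obtain ⟨d, hd⟩ : ∃ d, t - 1 = L * d + q := ⟨(t-1)/L, (Nat.div_add_mod (t-1) L).symm⟩
  have h1 : t % L = if q + 1 = L then 0 else q + 1 := by
    have : t = L * d + (q + 1) := by omega
    rw [this, Nat.mul_add_mod]
    split_ifs with h
    · rw [h, Nat.mod_self]
    · exact Nat.mod_eq_of_lt (by omega)
  have h2 : (t - 2) % L = if q = 0 then L - 1 else q - 1 := by
    split_ifs with h
    · have hd1 : 1 ≤ d := by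
        rcases d with _ | d
        · omega
        · omega
      have hLd : L * d = L * (d-1) + L := by
        nth_rewrite 1 [show d = d - 1 + 1 by omega]
        ring
      have : t - 2 = L * (d - 1) + (L - 1) := by omega
      rw [this, Nat.mul_add_mod]
      exact Nat.mod_eq_of_lt (by omega)
    · have : t - 2 = L * d + (q - 1) := by omega
      rw [this, Nat.mul_add_mod]
      exact Nat.mod_eq_of_lt (by omega)
  have e1 : piC n t = if q + 1 ≤ n then q + 1 else 2*n - (q+1) := by rw [piC_eq]
  have e2 : piC n (t+1) = if t % L + 1 ≤ n then t % L + 1 else 2*n - (t % L + 1) := by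
    rw [piC_eq]; simp only [Nat.add_sub_cancel, ← hL]
  have e3 : piC n (t-1) = if (t-2) % L + 1 ≤ n then (t-2) % L + 1 else 2*n - ((t-2) % L + 1) := by
    rw [piC_eq]
    have : t - 1 - 1 = t - 2 := by omega
    rw [this, ← hL]
  have hcase : q = 0 ∨ (1 ≤ q ∧ q ≤ n-2) ∨ q = n-1 ∨ (n ≤ q ∧ q ≤ 2*n-4) ∨ q = 2*n-3 := by
    omega
  rcases hcase with h | h | h | h | h
  · rw [if_neg (by omega)] at h1
    rw [if_pos h] at h2
    have hA : piC n t = 1 := by rw [e1, if_pos (by omega)]; omega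
    have hB : piC n (t+1) = 2 := by rw [e2, h1, if_pos (by omega)]; omega
    have hC : piC n (t-1) = 2 := by rw [e3, h2, if_neg (by omega)]; omega
    left; exact ⟨hA, hC, hB⟩
  · rw [if_neg (by omega)] at h1
    rw [if_neg (by omega)] at h2
    have hA : piC n t = q + 1 := by rw [e1, if_pos (by omega)]
    have hB : piC n (t+1) = q + 2 := by rw [e2, h1, if_pos (by omega)]
    have hC : piC n (t-1) = q := by rw [e3, h2, if_pos (by omega)]; omega
    right; right
    exact ⟨by omega, by omega, Or.inl ⟨by omega, by omega⟩⟩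
  · rw [if_neg (by omega)] at h1
    rw [if_neg (by omega)] at h2
    have hA : piC n t = n := by rw [e1, if_pos (by omega)]; omega
    have hB : piC n (t+1) = n - 1 := by rw [e2, h1, if_neg (by omega)]; omega
    have hC : piC n (t-1) = n - 1 := by rw [e3, h2, if_pos (by omega)]; omega
    right; left; exact ⟨hA, hC, hB⟩
  · rw [if_neg (by omega)] at h1
    rw [if_neg (by omega)] at h2
    have hA : piC n t = 2*n - q - 1 := by rw [e1, if_neg (by omega)]; omega
    have hB : piC n (t+1) = 2*n - q - 2 := by rw [e2, h1, if_neg (by omega)]; omega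
    have hC : piC n (t-1) = 2*n - q := by
      rw [e3, h2]
      rcases Nat.eq_or_lt_of_le h.1 with h' | h'
      · rw [if_pos (by omega)]; omega
      · rw [if_neg (by omega)]; omega
    right; right
    exact ⟨by omega, by omega, Or.inr ⟨by omega, by omega⟩⟩
  · rw [if_pos (by omega)] at h1
    rw [if_neg (by omega)] at h2
    have hA : piC n t = 2 := by rw [e1, if_neg (by omega)]; omega
    have hB : piC n (t+1) = 1 := by rw [e2, h1, if_pos (by omega)]
    have hC : piC n (t-1) = 3 := by
      rw [e3, h2]
      rcases Nat.eq_or_lt_of_le hn with h' | h'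
      · rw [if_pos (by omega)]; omega
      · rw [if_neg (by omega)]; omega
    right; right
    exact ⟨by omega, by omega, Or.inr ⟨by omega, by omega⟩⟩

section Cartan
variable {n : ℕ} {A : ℕ → ℕ → ℤ}

/-- row values at an interior vertex -/
lemma cartan_interior (hn : 3 ≤ n) (hA : CartanD2 n A) {i : ℕ} (h1 : 2 ≤ i) (h2 : i ≤ n - 1) :
    A i (i - 1) = -1 ∧ A i (i + 1) = -1 := by
  obtain ⟨_, h12, h21, hmid, hn1, _, _⟩ := hA
  constructor
  · rcases Nat.eq_or_lt_of_le h1 with h | h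
    · rw [← h]; simpa using h21
    · have := (hmid (i-1) (by omega) (by omega)).2
      have he : i - 1 + 1 = i := by omega
      rwa [he] at this
  · rcases Nat.lt_or_ge i (n-1) with h | h
    · exact (hmid i h1 (by omega)).1
    · have he : i = n - 1 := by omega
      rw [he, show n - 1 + 1 = n by omega]; exact hn1

lemma cartan_one (hn : 3 ≤ n) (hA : CartanD2 n A) : A 1 2 = -2 := hA.2.1

lemma cartan_n (hn : 3 ≤ n) (hA : CartanD2 n A) : A n (n-1) = -2 := hA.2.2.2.2.2.1

lemma cartan_zero (hA : CartanD2 n A) {i w : ℕ} (hi1 : 1 ≤ i) (hi2 : i ≤ n)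
    (hw1 : 1 ≤ w) (hw2 : w ≤ n) (hne : w ≠ i) (hne2 : w ≠ i + 1) (hne3 : w + 1 ≠ i) :
    A i w = 0 := by
  exact hA.2.2.2.2.2.2 i w hi1 hi2 hw1 hw2 (fun h => hne h.symm) (by omega)

/-- adjacency gives negative entries both ways -/
lemma cartan_adj_neg (hn : 3 ≤ n) (hA : CartanD2 n A) {i : ℕ} (h1 : 1 ≤ i) (h2 : i + 1 ≤ n) :
    A i (i+1) < 0 ∧ A (i+1) i < 0 := by
  obtain ⟨_, h12, h21, hmid, hn1, hnn, _⟩ := hA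
  rcases Nat.eq_or_lt_of_le h1 with h | h
  · rw [← h]
    rw [show (1:ℕ) + 1 = 2 by rfl]
    omega
  · rcases Nat.lt_or_ge (i+1) n with h' | h'
    · have := hmid i (by omega) (by omega); omega
    · have he : i + 1 = n := by omega
      have he2 : i = n - 1 := by omega
      rw [he, he2]; omega

end Cartan

section SumDecomp
variable {M : Type*} [AddCommMonoid M] {ι : ℕ → ℕ}

lemma sum_two_letters (S : Finset ℕ) (g : ℕ → M) {u v c d : ℕ} (huv : u ≠ v)
    (hu : S.filter (fun m => ι m = u) = {c}) (hv : S.filter (fun m => ι m = v) = {d})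
    (h0 : ∀ m ∈ S, ι m ≠ u → ι m ≠ v → g m = 0) :
    ∑ m ∈ S, g m = g c + g d := by
  classical
  rw [← Finset.sum_filter_add_sum_filter_not S (fun m => ι m = u), hu]
  have hv' : (S.filter (fun m => ¬ ι m = u)).filter (fun m => ι m = v) = {d} := by
    rw [Finset.filter_filter, ← hv]
    apply Finset.filter_congr
    intro m hm
    constructor
    · rintro ⟨h1, h2⟩; exact h2
    · intro h; exact ⟨by rw [h]; exact fun hc => huv hc.symm, h⟩
  rw [← Finset.sum_filter_add_sum_filter_not (S.filter (fun m => ¬ ι m = u))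
    (fun m => ι m = v), hv']
  have hz : ∑ m ∈ (S.filter (fun m => ¬ ι m = u)).filter (fun m => ¬ ι m = v), g m = 0 := by
    apply Finset.sum_eq_zero
    intro m hm
    simp only [Finset.mem_filter] at hm
    exact h0 m hm.1.1 hm.1.2 hm.2
  rw [hz, Finset.sum_singleton, Finset.sum_singleton, add_zero]

lemma sum_one_letter (S : Finset ℕ) (g : ℕ → M) {u c : ℕ}
    (hu : S.filter (fun m => ι m = u) = {c})
    (h0 : ∀ m ∈ S, ι m ≠ u → g m = 0) :
    ∑ m ∈ S, g m = g c := by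
  classical
  rw [← Finset.sum_filter_add_sum_filter_not S (fun m => ι m = u), hu]
  have hz : ∑ m ∈ S.filter (fun m => ¬ ι m = u), g m = 0 := by
    apply Finset.sum_eq_zero
    intro m hm
    simp only [Finset.mem_filter] at hm
    exact h0 m hm.1 hm.2
  rw [hz, Finset.sum_singleton, add_zero]

end SumDecomp

section BetaComp
variable {A : ℕ → ℕ → ℤ} {ι : ℕ → ℕ} {i : ℕ}

lemma betaForm_occ_two (hinfi : Hinf ι i) {u v cu cv : ℕ} (huv : u ≠ v) {s : ℕ} (hs : 1 ≤ s)
    (hu : (Finset.Ioo (occPos ι i s) (occPos ι i (s+1))).filter (fun m => ι m = u) = {cu})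
    (hv : (Finset.Ioo (occPos ι i s) (occPos ι i (s+1))).filter (fun m => ι m = v) = {cv})
    (h0 : ∀ m, occPos ι i s < m → m < occPos ι i (s+1) → ι m ≠ i → ι m ≠ u → ι m ≠ v →
      A i (ι m) = 0) :
    betaForm A ι (occPos ι i s) = Finsupp.single (occPos ι i s) 1 +
      Finsupp.single (occPos ι i (s+1)) 1 +
      ((A i u : ℚ) • Finsupp.single cu 1 + (A i v : ℚ) • Finsupp.single cv 1) := by
  obtain ⟨h1, h2, h3⟩ := occPos_spec hinfi s hs
  rw [betaForm, if_neg (by omega), rPlus_occPos hinfi hs, h2]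
  congr 1
  have hcu : ι cu = u := by
    have : cu ∈ (Finset.Ioo (occPos ι i s) (occPos ι i (s+1))).filter (fun m => ι m = u) := by
      rw [hu]; exact Finset.mem_singleton_self cu
    exact (Finset.mem_filter.mp this).2
  have hcv : ι cv = v := by
    have : cv ∈ (Finset.Ioo (occPos ι i s) (occPos ι i (s+1))).filter (fun m => ι m = v) := by
      rw [hv]; exact Finset.mem_singleton_self cv
    exact (Finset.mem_filter.mp this).2
  rw [sum_two_letters (Finset.Ioo (occPos ι i s) (occPos ι i (s+1)))
    (fun m => (A i (ι m) : ℚ) • Finsupp.single m (1:ℚ)) huv hu hv ?_]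
  · rw [hcu, hcv]
  · intro m hm hmu hmv
    simp only [Finset.mem_Ioo] at hm
    have hmi : ι m ≠ i := by
      intro hmi
      have := filter_self_Ioo hinfi hs (j := i)
      have hmem : m ∈ (Finset.Ioo (occPos ι i s) (occPos ι i (s+1))).filter
          (fun m => ι m = i) := Finset.mem_filter.mpr ⟨Finset.mem_Ioo.mpr hm, hmi⟩
      rw [this] at hmem
      exact absurd hmem (Finset.notMem_empty m)
    rw [h0 m hm.1 hm.2 hmi hmu hmv]
    simp

lemma betaForm_occ_one (hinfi : Hinf ι i) {u cu : ℕ} {s : ℕ} (hs : 1 ≤ s)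
    (hu : (Finset.Ioo (occPos ι i s) (occPos ι i (s+1))).filter (fun m => ι m = u) = {cu})
    (h0 : ∀ m, occPos ι i s < m → m < occPos ι i (s+1) → ι m ≠ i → ι m ≠ u →
      A i (ι m) = 0) :
    betaForm A ι (occPos ι i s) = Finsupp.single (occPos ι i s) 1 +
      Finsupp.single (occPos ι i (s+1)) 1 + (A i u : ℚ) • Finsupp.single cu 1 := by
  obtain ⟨h1, h2, h3⟩ := occPos_spec hinfi s hs
  rw [betaForm, if_neg (by omega), rPlus_occPos hinfi hs, h2]
  congr 1
  have hcu : ι cu = u := by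
    have : cu ∈ (Finset.Ioo (occPos ι i s) (occPos ι i (s+1))).filter (fun m => ι m = u) := by
      rw [hu]; exact Finset.mem_singleton_self cu
    exact (Finset.mem_filter.mp this).2
  rw [sum_one_letter (Finset.Ioo (occPos ι i s) (occPos ι i (s+1)))
    (fun m => (A i (ι m) : ℚ) • Finsupp.single m (1:ℚ)) hu ?_]
  · rw [hcu]
  · intro m hm hmu
    simp only [Finset.mem_Ioo] at hm
    have hmi : ι m ≠ i := by
      intro hmi
      have := filter_self_Ioo hinfi hs (j := i)
      have hmem : m ∈ (Finset.Ioo (occPos ι i s) (occPos ι i (s+1))).filter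
          (fun m => ι m = i) := Finset.mem_filter.mpr ⟨Finset.mem_Ioo.mpr hm, hmi⟩
      rw [this] at hmem
      exact absurd hmem (Finset.notMem_empty m)
    rw [h0 m hm.1 hm.2 hmi hmu]
    simp

end BetaComp

lemma xsj_pos (ι : ℕ → ℕ) {s : ℕ} (j : ℕ) (hs : s ≠ 0) :
    xsj ι s j = Finsupp.single (occPos ι j s) 1 := if_neg hs

lemma piC_period {n t : ℕ} (ht : 1 ≤ t) : piC n (t + (2*n-2)) = piC n t := by
  rw [piC_eq, piC_eq, show t + (2*n-2) - 1 = (t-1) + (2*n-2) by omega, Nat.add_mod_right]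

lemma piC_small {n t : ℕ} (hn : 3 ≤ n) (h1 : 1 ≤ t) (h2 : t ≤ n) : piC n t = t := by
  rw [piC_eq, Nat.mod_eq_of_lt (by omega), if_pos (by omega)]
  omega

lemma piC_large {n t : ℕ} (hn : 3 ≤ n) (h1 : n < t) (h2 : t ≤ 2*n-2) : piC n t = 2*n - t := by
  rw [piC_eq, Nat.mod_eq_of_lt (by omega), if_neg (by omega)]
  omega

section Support
variable {n : ℕ} {A : ℕ → ℕ → ℤ} {ι : ℕ → ℕ} {lam : ℕ → ℕ} {k K : ℕ}

lemma hinf_of_seq (hseq : SeqCon n ι) {j : ℕ} (h1 : 1 ≤ j) (h2 : j ≤ n) : Hinf ι j :=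
  fun N => hseq.2.2 j h1 h2 N

lemma alt_of_adapted (hn : 3 ≤ n) (hA : CartanD2 n A) (had : Adapted n A ι)
    {u w : ℕ} (h1 : 1 ≤ u) (h2 : u ≤ n) (h3 : 1 ≤ w) (h4 : w ≤ n)
    (hadj : w = u + 1 ∨ u = w + 1) : AltProp ι u w := by
  have hne : u ≠ w := by rcases hadj with h | h <;> omega
  have hneg : A u w < 0 := by
    rcases hadj with h | h
    · rw [h]; exact (cartan_adj_neg hn hA h1 (by omega)).1
    · subst h; exact (cartan_adj_neg hn hA h3 (by omega)).2
  exact had u w h1 h2 h3 h4 hne hneg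

lemma pOcc_cases (hseq : SeqCon n ι) {u w : ℕ} (h1 : 1 ≤ u) (h2 : u ≤ n)
    (h3 : 1 ≤ w) (h4 : w ≤ n) (hne : u ≠ w) :
    (pOcc ι u w = 1 ∧ pOcc ι w u = 0 ∧ occPos ι u 1 < occPos ι w 1) ∨
    (pOcc ι u w = 0 ∧ pOcc ι w u = 1 ∧ occPos ι w 1 < occPos ι u 1) := by
  have hiu := hinf_of_seq hseq h1 h2
  have hiw := hinf_of_seq hseq h3 h4
  have eu : iotaFirst ι u = occPos ι u 1 := iotaFirst_eq_occPos hiu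
  have ew : iotaFirst ι w = occPos ι w 1 := iotaFirst_eq_occPos hiw
  have hne' : occPos ι u 1 ≠ occPos ι w 1 := by
    intro h
    have := (occPos_spec hiu 1 le_rfl).2.1
    rw [h, (occPos_spec hiw 1 le_rfl).2.1] at this
    exact hne this.symm
  rcases Nat.lt_or_ge (occPos ι u 1) (occPos ι w 1) with h | h
  · left
    refine ⟨by rw [pOcc, if_pos (by rw [eu, ew]; omega)],
      by rw [pOcc, if_neg (by rw [eu, ew]; omega)], h⟩
  · right
    have h' : occPos ι w 1 < occPos ι u 1 := by omega
    refine ⟨by rw [pOcc, if_neg (by rw [eu, ew]; omega)],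
      by rw [pOcc, if_pos (by rw [eu, ew]; omega)], h'⟩

/-- the master gap lemma: the occurrences of a letter `v` adjacent to `i`,
strictly between the `s`-th and `(s+1)`-st occurrences of `i`, form the
singleton consisting of the `(s + p_{v,i})`-th occurrence of `v`. -/
lemma gap_filter (hn : 3 ≤ n) (hA : CartanD2 n A) (hseq : SeqCon n ι) (had : Adapted n A ι)
    {i v : ℕ} (h1 : 1 ≤ i) (h2 : i ≤ n) (h3 : 1 ≤ v) (h4 : v ≤ n)
    (hadj : v = i + 1 ∨ i = v + 1) {s : ℕ} (hs : 1 ≤ s) :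
    (Finset.Ioo (occPos ι i s) (occPos ι i (s+1))).filter (fun m => ι m = v)
      = {occPos ι v (s + pOcc ι v i)} := by
  have hne : i ≠ v := by omega
  have hiu := hinf_of_seq hseq h1 h2
  have hiv := hinf_of_seq hseq h3 h4
  have hvi : AltProp ι v i := alt_of_adapted hn hA had h3 h4 h1 h2 (by omega)
  have hiv' : AltProp ι i v := alt_of_adapted hn hA had h1 h2 h3 h4 hadj
  rcases pOcc_cases hseq h3 h4 h1 h2 (by omega) with ⟨e1, e2, hf⟩ | ⟨e1, e2, hf⟩
  · rw [e1]
    exact filter_first_Ioo_second (by omega) hvi hf hiv hiu hs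
  · rw [e1, Nat.add_zero]
    exact filter_second_Ioo_first hne hiv' hf hiu hiv hs

end Support

section Support2
variable {n : ℕ} {A : ℕ → ℕ → ℤ} {ι : ℕ → ℕ} {lam : ℕ → ℕ} {k K : ℕ}

lemma filter_self_before {j : ℕ} (hinf : Hinf ι j) :
    (Finset.Ico 1 (occPos ι j 1)).filter (fun m => ι m = j) = ∅ := by
  ext m
  simp only [Finset.mem_filter, Finset.mem_Ico, Finset.notMem_empty, iff_false]
  rintro ⟨⟨hm1, hm2⟩, hm3⟩
  have : occPos ι j 1 ≤ m := by
    rw [occPos_le_iff hinf le_rfl]; exact cnt_pos_occ ι hm1 hm3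
  omega

lemma notin_of_filter_empty {S : Finset ℕ} {w : ℕ}
    (h : S.filter (fun m => ι m = w) = ∅) : ∀ m ∈ S, ι m ≠ w := by
  intro m hm hmw
  have : m ∈ S.filter (fun m => ι m = w) := Finset.mem_filter.mpr ⟨hm, hmw⟩
  rw [h] at this
  exact absurd this (Finset.notMem_empty m)

lemma K_struct (hn : 3 ≤ n) (hk1 : 1 < k) (hkn : k < n)
    (hK : (iotaFirst ι (k + 1) < iotaFirst ι k ∧ iotaFirst ι k < iotaFirst ι (k - 1) ∧
            K = k) ∨
          (iotaFirst ι (k - 1) < iotaFirst ι k ∧ iotaFirst ι k < iotaFirst ι (k + 1) ∧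
            K = 2 * n - k)) :
    2 ≤ K ∧ piC n K = k ∧
    ((piC n (K+1) = k+1 ∧ iotaFirst ι (k+1) < iotaFirst ι k ∧
        iotaFirst ι k < iotaFirst ι (k-1)) ∨
     (piC n (K+1) = k-1 ∧ iotaFirst ι (k-1) < iotaFirst ι k ∧
        iotaFirst ι k < iotaFirst ι (k+1))) := by
  rcases hK with ⟨ha1, ha2, ha3⟩ | ⟨hb1, hb2, hb3⟩
  · subst ha3
    exact ⟨by omega, piC_small hn (by omega) (by omega),
      Or.inl ⟨piC_small hn (by omega) (by omega), ha1, ha2⟩⟩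
  · subst hb3
    refine ⟨by omega, piC_large hn (by omega) (by omega) |>.trans (by omega), ?_⟩
    right
    refine ⟨?_, hb1, hb2⟩
    rcases Nat.lt_or_ge 2 k with h | h
    · rw [piC_large hn (by omega) (by omega)]; omega
    · have hk2 : k = 2 := by omega
      subst hk2
      have : 2*n - 2 + 1 = 1 + (2*n-2) := by omega
      rw [this, piC_period (by omega), piC_small hn (by omega) (by omega)]

lemma Pfun_base : Pfun n ι K K = 0 := by
  rw [Pfun, Finset.Icc_eq_empty (by omega), Finset.sum_empty]

lemma Pfun_succ {r : ℕ} (hr : K ≤ r) :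
    Pfun n ι K (r+1) = Pfun n ι K r + pOcc ι (piC n (r+1)) (piC n r) := by
  rw [Pfun, Pfun, Finset.sum_Icc_succ_top (by omega)]
  simp

lemma Pfun_pos (hn : 3 ≤ n) (hk1 : 1 < k) (hkn : k < n)
    (hK : (iotaFirst ι (k + 1) < iotaFirst ι k ∧ iotaFirst ι k < iotaFirst ι (k - 1) ∧
            K = k) ∨
          (iotaFirst ι (k - 1) < iotaFirst ι k ∧ iotaFirst ι k < iotaFirst ι (k + 1) ∧
            K = 2 * n - k)) {r : ℕ} (hr : K + 1 ≤ r) : 1 ≤ Pfun n ι K r := by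
  obtain ⟨hK2, hKpi, hcase⟩ := K_struct hn hk1 hkn hK
  induction r, hr using Nat.le_induction with
  | base =>
      have : Pfun n ι K (K+1) = Pfun n ι K K + pOcc ι (piC n (K+1)) (piC n K) :=
        Pfun_succ le_rfl
      rw [this, Pfun_base, hKpi]
      rcases hcase with ⟨h1, h2, _⟩ | ⟨h1, h2, _⟩ <;>
        · rw [h1, pOcc, if_pos h2]
  | succ r hr ih =>
      rw [Pfun_succ (by omega)]
      omega

end Support2

section Support3
variable {n : ℕ} {A : ℕ → ℕ → ℤ} {ι : ℕ → ℕ} {lam : ℕ → ℕ} {k K : ℕ}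

lemma ShatOp_pos {r' : ℕ} {φ : ℚ × (ℕ →₀ ℚ)} (h : 0 < φ.2 r') :
    ShatOp A ι lam r' φ = φ - ((0 : ℚ), betaForm A ι r') := if_pos h

lemma ShatOp_neg {r' : ℕ} {φ : ℚ × (ℕ →₀ ℚ)} (h : φ.2 r' < 0) :
    ShatOp A ι lam r' φ = φ + betaMinusHat A ι lam r' := by
  rw [ShatOp, if_neg (by linarith), if_pos h]

lemma ShatOp_zero {r' : ℕ} {φ : ℚ × (ℕ →₀ ℚ)} (h : φ.2 r' = 0) :
    ShatOp A ι lam r' φ = φ := by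
  rw [ShatOp, if_neg (by rw [h]; exact lt_irrefl 0), if_neg (by rw [h]; exact lt_irrefl 0)]

lemma sub_single_apply (a b r' : ℕ) :
    ((Finsupp.single a 1 - Finsupp.single b 1 : ℕ →₀ ℚ)) r' =
      (if a = r' then (1:ℚ) else 0) - (if b = r' then (1:ℚ) else 0) := by
  simp [Finsupp.sub_apply, Finsupp.single_apply]

lemma base_sum (hn : 3 ≤ n) (hA : CartanD2 n A) (hseq : SeqCon n ι) (had : Adapted n A ι)
    (hk1 : 1 < k) (hkn : k < n) {i w : ℕ}
    (hiw : (i = k+1 ∧ w = k-1) ∨ (i = k-1 ∧ w = k+1))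
    (hfi : occPos ι i 1 < occPos ι k 1) (hfw : occPos ι k 1 < occPos ι w 1) :
    ∑ m ∈ Finset.Ico 1 (occPos ι k 1), (A k (ι m) : ℚ) • Finsupp.single m (1:ℚ)
      = -Finsupp.single (occPos ι i 1) 1 := by
  have hib : 1 ≤ i ∧ i ≤ n := by rcases hiw with ⟨h1, h2⟩ | ⟨h1, h2⟩ <;> omega
  have hwb : 1 ≤ w ∧ w ≤ n := by rcases hiw with ⟨h1, h2⟩ | ⟨h1, h2⟩ <;> omega
  have hik : i ≠ k := by rcases hiw with ⟨h1, h2⟩ | ⟨h1, h2⟩ <;> omega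
  have hinfi := hinf_of_seq hseq hib.1 hib.2
  have hinfw := hinf_of_seq hseq hwb.1 hwb.2
  have hinfk := hinf_of_seq hseq (by omega : 1 ≤ k) (by omega : k ≤ n)
  have halt : AltProp ι i k := by
    apply alt_of_adapted hn hA had hib.1 hib.2 (by omega) (by omega)
    rcases hiw with ⟨h1, h2⟩ | ⟨h1, h2⟩ <;> omega
  have hu : (Finset.Ico 1 (occPos ι k 1)).filter (fun m => ι m = i) = {occPos ι i 1} :=
    filter_first_before_second hik halt hfi hinfi hinfk
  have hwfil : (Finset.Ico 1 (occPos ι k 1)).filter (fun m => ι m = w) = ∅ :=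
    filter_second_before_first hfw hinfw
  have hkfil : (Finset.Ico 1 (occPos ι k 1)).filter (fun m => ι m = k) = ∅ :=
    filter_self_before hinfk
  have hAki : A k i = -1 := by
    rcases hiw with ⟨h1, h2⟩ | ⟨h1, h2⟩
    · rw [h1]; exact (cartan_interior hn hA (by omega) (by omega)).2
    · rw [h1]; exact (cartan_interior hn hA (by omega) (by omega)).1
  rw [sum_one_letter (Finset.Ico 1 (occPos ι k 1))
    (fun m => (A k (ι m) : ℚ) • Finsupp.single m (1:ℚ)) hu ?_]
  · have : ι (occPos ι i 1) = i := (occPos_spec hinfi 1 le_rfl).2.1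
    simp only [this, hAki]
    push_cast
    rw [neg_smul, one_smul]
  · intro m hm hmi
    have hmw : ι m ≠ w := notin_of_filter_empty hwfil m hm
    have hmk : ι m ≠ k := notin_of_filter_empty hkfil m hm
    have hm1 : 1 ≤ m := (Finset.mem_Ico.mp hm).1
    have hmb := hseq.1 m hm1
    rw [cartan_zero hA (by omega : 1 ≤ k) (by omega : k ≤ n) hmb.1 hmb.2 hmk
      (by rcases hiw with ⟨h1, h2⟩ | ⟨h1, h2⟩ <;> omega)
      (by rcases hiw with ⟨h1, h2⟩ | ⟨h1, h2⟩ <;> omega)]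
    simp

end Support3

section Support4
variable {n : ℕ} {A : ℕ → ℕ → ℤ} {ι : ℕ → ℕ} {lam : ℕ → ℕ} {k K : ℕ}

lemma Pfun_K1 (hn : 3 ≤ n) (hk1 : 1 < k) (hkn : k < n)
    (hK : (iotaFirst ι (k + 1) < iotaFirst ι k ∧ iotaFirst ι k < iotaFirst ι (k - 1) ∧
            K = k) ∨
          (iotaFirst ι (k - 1) < iotaFirst ι k ∧ iotaFirst ι k < iotaFirst ι (k + 1) ∧
            K = 2 * n - k)) : Pfun n ι K (K+1) = 1 := by
  obtain ⟨hK2, hKpi, hcase⟩ := K_struct hn hk1 hkn hK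
  rw [Pfun_succ le_rfl, Pfun_base, hKpi]
  rcases hcase with ⟨h1, h2, _⟩ | ⟨h1, h2, _⟩ <;>
    · rw [h1, pOcc, if_pos h2]

lemma FboxK1_explicit (hn : 3 ≤ n) (hseq : SeqCon n ι) (hk1 : 1 < k) (hkn : k < n)
    (lam : ℕ → ℕ)
    (hK : (iotaFirst ι (k + 1) < iotaFirst ι k ∧ iotaFirst ι k < iotaFirst ι (k - 1) ∧
            K = k) ∨
          (iotaFirst ι (k - 1) < iotaFirst ι k ∧ iotaFirst ι k < iotaFirst ι (k + 1) ∧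
            K = 2 * n - k)) :
    ∃ i₀ w : ℕ, ((i₀ = k+1 ∧ w = k-1) ∨ (i₀ = k-1 ∧ w = k+1)) ∧
      occPos ι i₀ 1 < occPos ι k 1 ∧ occPos ι k 1 < occPos ι w 1 ∧
      Fbox n ι lam k K (K+1) =
        ((lam k : ℚ), Finsupp.single (occPos ι i₀ 1) 1 - Finsupp.single (occPos ι k 1) 1) := by
  obtain ⟨hK2, hKpi, hcase⟩ := K_struct hn hk1 hkn hK
  have hPK1 := Pfun_K1 hn hk1 hkn hK
  have hinfk := hinf_of_seq hseq (by omega : 1 ≤ k) (by omega : k ≤ n)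
  have hfb : Fbox n ι lam k K (K+1) =
      ((lam k : ℚ), xsj ι 1 (piC n (K+1)) - xsj ι 1 (piC n K)) := by
    rw [Fbox, show K + 1 - 1 = K by omega, hPK1, Pfun_base]
  rcases hcase with ⟨h1, h2, h3⟩ | ⟨h1, h2, h3⟩
  · have hinfi := hinf_of_seq hseq (by omega : 1 ≤ k+1) (by omega : k+1 ≤ n)
    have hinfw := hinf_of_seq hseq (by omega : 1 ≤ k-1) (by omega : k-1 ≤ n)
    rw [iotaFirst_eq_occPos hinfi, iotaFirst_eq_occPos hinfk] at h2
    rw [iotaFirst_eq_occPos hinfk, iotaFirst_eq_occPos hinfw] at h3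
    refine ⟨k+1, k-1, Or.inl ⟨rfl, rfl⟩, h2, h3, ?_⟩
    rw [hfb, h1, hKpi, xsj_pos ι _ one_ne_zero, xsj_pos ι _ one_ne_zero]
  · have hinfi := hinf_of_seq hseq (by omega : 1 ≤ k-1) (by omega : k-1 ≤ n)
    have hinfw := hinf_of_seq hseq (by omega : 1 ≤ k+1) (by omega : k+1 ≤ n)
    rw [iotaFirst_eq_occPos hinfi, iotaFirst_eq_occPos hinfk] at h2
    rw [iotaFirst_eq_occPos hinfk, iotaFirst_eq_occPos hinfw] at h3
    refine ⟨k-1, k+1, Or.inr ⟨rfl, rfl⟩, h2, h3, ?_⟩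
    rw [hfb, h1, hKpi, xsj_pos ι _ one_ne_zero, xsj_pos ι _ one_ne_zero]

lemma lamForm_eq_FboxK1 (hn : 3 ≤ n) (hA : CartanD2 n A) (hseq : SeqCon n ι)
    (had : Adapted n A ι) (hk1 : 1 < k) (hkn : k < n) (lam : ℕ → ℕ)
    (hK : (iotaFirst ι (k + 1) < iotaFirst ι k ∧ iotaFirst ι k < iotaFirst ι (k - 1) ∧
            K = k) ∨
          (iotaFirst ι (k - 1) < iotaFirst ι k ∧ iotaFirst ι k < iotaFirst ι (k + 1) ∧
            K = 2 * n - k)) :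
    lamForm A ι lam k = Fbox n ι lam k K (K+1) := by
  obtain ⟨i₀, w, hiw, h2, h3, hfb⟩ := FboxK1_explicit hn hseq hk1 hkn lam hK
  have hinfk := hinf_of_seq hseq (by omega : 1 ≤ k) (by omega : k ≤ n)
  have hsum := base_sum hn hA hseq had hk1 hkn hiw h2 h3
  rw [hfb, lamForm, iotaFirst_eq_occPos hinfk, hsum]
  apply Prod.ext
  · rfl
  · simp

lemma Shat_base_zero (hn : 3 ≤ n) (hA : CartanD2 n A) (hseq : SeqCon n ι)
    (had : Adapted n A ι) (hk1 : 1 < k) (hkn : k < n) (lam : ℕ → ℕ)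
    (hK : (iotaFirst ι (k + 1) < iotaFirst ι k ∧ iotaFirst ι k < iotaFirst ι (k - 1) ∧
            K = k) ∨
          (iotaFirst ι (k - 1) < iotaFirst ι k ∧ iotaFirst ι k < iotaFirst ι (k + 1) ∧
            K = 2 * n - k)) :
    ShatOp A ι lam (occPos ι k 1) (Fbox n ι lam k K (K+1)) = 0 := by
  obtain ⟨i₀, w, hiw, h2, h3, hfb⟩ := FboxK1_explicit hn hseq hk1 hkn lam hK
  have hinfk := hinf_of_seq hseq (by omega : 1 ≤ k) (by omega : k ≤ n)
  have hib : 1 ≤ i₀ ∧ i₀ ≤ n := by rcases hiw with ⟨ha, hb⟩ | ⟨ha, hb⟩ <;> omega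
  have hinfi := hinf_of_seq hseq hib.1 hib.2
  have hne : occPos ι i₀ 1 ≠ occPos ι k 1 := by omega
  have hco : (Fbox n ι lam k K (K+1)).2 (occPos ι k 1) = -1 := by
    rw [hfb]
    simp only []
    rw [sub_single_apply, if_neg hne, if_pos rfl]
    norm_num
  rw [ShatOp_neg (by rw [hco]; norm_num)]
  have hrm : rMinus ι (occPos ι k 1) = 0 := rMinus_occPos_one hinfk
  have hbm : betaMinusHat A ι lam (occPos ι k 1) =
      (-(lam k : ℚ), (∑ m ∈ Finset.Ico 1 (occPos ι k 1),
        (A k (ι m) : ℚ) • Finsupp.single m 1) + Finsupp.single (occPos ι k 1) 1) := by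
    rw [betaMinusHat, if_neg (by rw [hrm]; exact fun h => h rfl)]
    rw [(occPos_spec hinfk 1 le_rfl).2.1]
  rw [hbm, hfb, base_sum hn hA hseq had hk1 hkn hiw h2 h3]
  apply Prod.ext
  · simp
  · simp

end Support4

section MainLemmas
variable {n : ℕ} {A : ℕ → ℕ → ℤ} {ι : ℕ → ℕ} {lam : ℕ → ℕ} {k K : ℕ}

lemma forward_shift (hn : 3 ≤ n) (hA : CartanD2 n A) (hseq : SeqCon n ι)
    (had : Adapted n A ι) (hk1 : 1 < k) (hkn : k < n) (lam : ℕ → ℕ)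
    (hK : (iotaFirst ι (k + 1) < iotaFirst ι k ∧ iotaFirst ι k < iotaFirst ι (k - 1) ∧
            K = k) ∨
          (iotaFirst ι (k - 1) < iotaFirst ι k ∧ iotaFirst ι k < iotaFirst ι (k + 1) ∧
            K = 2 * n - k)) {r : ℕ} (hr : K + 1 ≤ r) :
    ShatOp A ι lam (occPos ι (piC n r) (Pfun n ι K r)) (Fbox n ι lam k K r)
      = Fbox n ι lam k K (r+1) := by
  obtain ⟨hK2, hKpi, hcase⟩ := K_struct hn hk1 hkn hK
  have hr2 : 2 ≤ r := by omega
  have hib := piC_bounds hn r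
  have hjb := piC_bounds hn (r-1)
  have hvb := piC_bounds hn (r+1)
  have hs1 : 1 ≤ Pfun n ι K r := Pfun_pos hn hk1 hkn hK hr
  have hPr : Pfun n ι K r = Pfun n ι K (r-1) + pOcc ι (piC n r) (piC n (r-1)) := by
    have h := Pfun_succ (n := n) (ι := ι) (K := K) (r := r-1) (by omega)
    rw [show r - 1 + 1 = r by omega] at h
    exact h
  have hPnext : Pfun n ι K (r+1) = Pfun n ι K r + pOcc ι (piC n (r+1)) (piC n r) :=
    Pfun_succ (by omega)
  have htri := piTriple hn hr2
  set i := piC n r with hidef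
  set jj := piC n (r-1) with hjdef
  set v := piC n (r+1) with hvdef
  set s := Pfun n ι K r with hsdef
  set a := occPos ι i s with hadef
  have hinfi := hinf_of_seq hseq hib.1 hib.2
  have hinfj := hinf_of_seq hseq hjb.1 hjb.2
  have hvinf := hinf_of_seq hseq hvb.1 hvb.2
  have hP1 : 1 + Pfun n ι K (r-1) ≠ 0 := by omega
  have hPn1 : 1 ≤ Pfun n ι K (r+1) := by omega
  -- the adjacency of jj to i
  have hadjj : jj = i + 1 ∨ i = jj + 1 := by
    rcases htri with ⟨h1, h2, h3⟩ | ⟨h1, h2, h3⟩ | ⟨h1, h2, h3⟩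
    · omega
    · omega
    · rcases h3 with ⟨h4, h5⟩ | ⟨h4, h5⟩ <;> omega
  have hadjv : v = i + 1 ∨ i = v + 1 := by
    rcases htri with ⟨h1, h2, h3⟩ | ⟨h1, h2, h3⟩ | ⟨h1, h2, h3⟩
    · omega
    · omega
    · rcases h3 with ⟨h4, h5⟩ | ⟨h4, h5⟩ <;> omega
  have hij_ne : i ≠ jj := by rcases hadjj with h | h <;> omega
  have hiv_ne : i ≠ v := by rcases hadjv with h | h <;> omega
  -- index bookkeeping
  have hpsumj : pOcc ι i jj + pOcc ι jj i = 1 := by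
    rcases pOcc_cases hseq hib.1 hib.2 hjb.1 hjb.2 hij_ne with ⟨e1, e2, _⟩ | ⟨e1, e2, _⟩ <;>
      omega
  have hbidx : s + pOcc ι jj i = 1 + Pfun n ι K (r-1) := by omega
  have hbfil : (Finset.Ioo a (occPos ι i (s+1))).filter (fun m => ι m = jj)
      = {occPos ι jj (1 + Pfun n ι K (r-1))} := by
    rw [← hbidx]
    exact gap_filter hn hA hseq had hib.1 hib.2 hjb.1 hjb.2 hadjj hs1
  set b := occPos ι jj (1 + Pfun n ι K (r-1)) with hbdef
  have hab : a < b ∧ b < occPos ι i (s+1) := by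
    have : b ∈ (Finset.Ioo a (occPos ι i (s+1))).filter (fun m => ι m = jj) := by
      rw [hbfil]; exact Finset.mem_singleton_self b
    have := (Finset.mem_filter.mp this).1
    exact Finset.mem_Ioo.mp this
  -- the linear part of F_r
  have hF : Fbox n ι lam k K r =
      ((lam k : ℚ), Finsupp.single a 1 - Finsupp.single b 1) := by
    rw [Fbox, xsj_pos ι _ (by omega), xsj_pos ι _ hP1]
  have hcoef : (Fbox n ι lam k K r).2 a = 1 := by
    rw [hF]
    simp only []
    rw [sub_single_apply, if_pos rfl, if_neg (by omega)]
    norm_num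
  rw [ShatOp_pos (by rw [hcoef]; norm_num)]
  -- the target
  have hF' : Fbox n ι lam k K (r+1) =
      ((lam k : ℚ), Finsupp.single (occPos ι v (Pfun n ι K (r+1))) 1
        - Finsupp.single (occPos ι i (s+1)) 1) := by
    rw [Fbox, show r + 1 - 1 = r by omega, xsj_pos ι _ (by omega), xsj_pos ι _ (by omega),
      show 1 + s = s + 1 by omega]
  rcases htri with ⟨h1, h2, h3⟩ | ⟨h1, h2, h3⟩ | ⟨h1, h2, h3⟩
  · -- i = 1, jj = v = 2
    have hvj : v = jj := by omega
    rw [hvj] at hPnext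
    have hcb : occPos ι v (Pfun n ι K (r+1)) = b := by
      rw [hvj, hbdef]
      congr 1
      omega
    have hbeta := betaForm_occ_one (A := A) hinfi hs1 hbfil
      (fun m hm1 hm2 hmi hmj => by
        have hm1' : 1 ≤ m := by
          have := (occPos_spec hinfi s hs1).1; omega
        have hmb := hseq.1 m hm1'
        exact cartan_zero hA hib.1 hib.2 hmb.1 hmb.2 hmi (by omega) (by omega))
    have hAij : A i jj = -2 := by rw [h1, h2]; exact cartan_one hn hA
    rw [← hadef] at hbeta
    rw [hF, hF', hcb, hbeta, hAij]
    apply Prod.ext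
    · simp
    · simp only [Prod.mk_sub_mk, Prod.snd]
      push_cast
      module
  · -- i = n, jj = v = n-1
    have hvj : v = jj := by omega
    rw [hvj] at hPnext
    have hcb : occPos ι v (Pfun n ι K (r+1)) = b := by
      rw [hvj, hbdef]
      congr 1
      omega
    have hbeta := betaForm_occ_one (A := A) hinfi hs1 hbfil
      (fun m hm1 hm2 hmi hmj => by
        have hm1' : 1 ≤ m := by
          have := (occPos_spec hinfi s hs1).1; omega
        have hmb := hseq.1 m hm1'
        exact cartan_zero hA hib.1 hib.2 hmb.1 hmb.2 hmi (by omega) (by omega))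
    have hAij : A i jj = -2 := by rw [h1, h2]; exact cartan_n hn hA
    rw [← hadef] at hbeta
    rw [hF, hF', hcb, hbeta, hAij]
    apply Prod.ext
    · simp
    · simp only [Prod.mk_sub_mk, Prod.snd]
      push_cast
      module
  · -- interior
    have hjv_ne : jj ≠ v := by rcases h3 with ⟨h4, h5⟩ | ⟨h4, h5⟩ <;> omega
    have hvfil : (Finset.Ioo a (occPos ι i (s+1))).filter (fun m => ι m = v)
        = {occPos ι v (Pfun n ι K (r+1))} := by
      rw [hPnext]
      exact gap_filter hn hA hseq had hib.1 hib.2 hvb.1 hvb.2 hadjv hs1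
    have hbeta := betaForm_occ_two (A := A) hinfi hjv_ne hs1 hbfil hvfil
      (fun m hm1 hm2 hmi hmj hmv => by
        have hm1' : 1 ≤ m := by
          have := (occPos_spec hinfi s hs1).1; omega
        have hmb := hseq.1 m hm1'
        refine cartan_zero hA hib.1 hib.2 hmb.1 hmb.2 hmi ?_ ?_
        · rcases h3 with ⟨h4, h5⟩ | ⟨h4, h5⟩ <;> omega
        · rcases h3 with ⟨h4, h5⟩ | ⟨h4, h5⟩ <;> omega)
    have hAij : A i jj = -1 := by
      rcases h3 with ⟨h4, h5⟩ | ⟨h4, h5⟩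
      · rw [h4]; exact (cartan_interior hn hA h1 h2).1
      · rw [h4]; exact (cartan_interior hn hA h1 h2).2
    have hAiv : A i v = -1 := by
      rcases h3 with ⟨h4, h5⟩ | ⟨h4, h5⟩
      · rw [h5]; exact (cartan_interior hn hA h1 h2).2
      · rw [h5]; exact (cartan_interior hn hA h1 h2).1
    rw [← hadef] at hbeta
    rw [hF, hF', hbeta, hAij, hAiv]
    apply Prod.ext
    · simp
    · simp only [Prod.mk_sub_mk, Prod.snd]
      push_cast
      module

end MainLemmas

section MainLemmas2
variable {n : ℕ} {A : ℕ → ℕ → ℤ} {ι : ℕ → ℕ} {lam : ℕ → ℕ} {k K : ℕ}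

lemma shat_noop (hn : 3 ≤ n) (hA : CartanD2 n A) (hseq : SeqCon n ι)
    (had : Adapted n A ι) (hk1 : 1 < k) (hkn : k < n) (lam : ℕ → ℕ)
    (hK : (iotaFirst ι (k + 1) < iotaFirst ι k ∧ iotaFirst ι k < iotaFirst ι (k - 1) ∧
            K = k) ∨
          (iotaFirst ι (k - 1) < iotaFirst ι k ∧ iotaFirst ι k < iotaFirst ι (k + 1) ∧
            K = 2 * n - k)) {r r' : ℕ} (hr : K + 1 ≤ r)
    (h1 : r' ≠ occPos ι (piC n r) (Pfun n ι K r))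
    (h2 : r' ≠ occPos ι (piC n (r-1)) (1 + Pfun n ι K (r-1))) :
    ShatOp A ι lam r' (Fbox n ι lam k K r) = Fbox n ι lam k K r := by
  have hs1 : 1 ≤ Pfun n ι K r := Pfun_pos hn hk1 hkn hK hr
  apply ShatOp_zero
  have hF : Fbox n ι lam k K r =
      ((lam k : ℚ), Finsupp.single (occPos ι (piC n r) (Pfun n ι K r)) 1
        - Finsupp.single (occPos ι (piC n (r-1)) (1 + Pfun n ι K (r-1))) 1) := by
    rw [Fbox, xsj_pos ι _ (by omega), xsj_pos ι _ (by omega)]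
  rw [hF]
  simp only [Prod.snd]
  rw [sub_single_apply, if_neg (fun h => h1 h.symm), if_neg (fun h => h2 h.symm)]
  norm_num

lemma backward_shift (hn : 3 ≤ n) (hA : CartanD2 n A) (hseq : SeqCon n ι)
    (had : Adapted n A ι) (hk1 : 1 < k) (hkn : k < n) (lam : ℕ → ℕ)
    (hK : (iotaFirst ι (k + 1) < iotaFirst ι k ∧ iotaFirst ι k < iotaFirst ι (k - 1) ∧
            K = k) ∨
          (iotaFirst ι (k - 1) < iotaFirst ι k ∧ iotaFirst ι k < iotaFirst ι (k + 1) ∧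
            K = 2 * n - k)) {r : ℕ} (hr : K + 2 ≤ r) :
    ShatOp A ι lam (occPos ι (piC n (r-1)) (1 + Pfun n ι K (r-1))) (Fbox n ι lam k K r)
      = Fbox n ι lam k K (r-1) := by
  obtain ⟨hK2, hKpi, hcase⟩ := K_struct hn hk1 hkn hK
  have hr2 : 2 ≤ r - 1 := by omega
  have hib := piC_bounds hn r
  have hjb := piC_bounds hn (r-1)
  have hwb := piC_bounds hn (r-2)
  have hs1 : 1 ≤ Pfun n ι K r := Pfun_pos hn hk1 hkn hK (by omega)
  have ht1 : 1 ≤ Pfun n ι K (r-1) := Pfun_pos hn hk1 hkn hK (by omega)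
  have hPr : Pfun n ι K r = Pfun n ι K (r-1) + pOcc ι (piC n r) (piC n (r-1)) := by
    have h := Pfun_succ (n := n) (ι := ι) (K := K) (r := r-1) (by omega)
    rw [show r - 1 + 1 = r by omega] at h
    exact h
  have hPprev : Pfun n ι K (r-1) = Pfun n ι K (r-2) + pOcc ι (piC n (r-1)) (piC n (r-2)) := by
    have h := Pfun_succ (n := n) (ι := ι) (K := K) (r := r-2) (by omega)
    rw [show r - 2 + 1 = r - 1 by omega] at h
    exact h
  have htri' := piTriple hn hr2
  rw [show r - 1 - 1 = r - 2 by omega, show r - 1 + 1 = r by omega] at htri'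
  set i := piC n r with hidef
  set jj := piC n (r-1) with hjdef
  set w := piC n (r-2) with hwdef
  set t := Pfun n ι K (r-1) with htdef
  have hinfi := hinf_of_seq hseq hib.1 hib.2
  have hinfj := hinf_of_seq hseq hjb.1 hjb.2
  have hinfw := hinf_of_seq hseq hwb.1 hwb.2
  have hadji : i = jj + 1 ∨ jj = i + 1 := by
    rcases htri' with ⟨h1, h2, h3⟩ | ⟨h1, h2, h3⟩ | ⟨h1, h2, h3⟩
    · omega
    · omega
    · rcases h3 with ⟨h4, h5⟩ | ⟨h4, h5⟩ <;> omega
  have hadjw : w = jj + 1 ∨ jj = w + 1 := by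
    rcases htri' with ⟨h1, h2, h3⟩ | ⟨h1, h2, h3⟩ | ⟨h1, h2, h3⟩
    · omega
    · omega
    · rcases h3 with ⟨h4, h5⟩ | ⟨h4, h5⟩ <;> omega
  have hij_ne : jj ≠ i := by rcases hadji with h | h <;> omega
  have hjw_ne : jj ≠ w := by rcases hadjw with h | h <;> omega
  have hpsumi : pOcc ι i jj + pOcc ι jj i = 1 := by
    rcases pOcc_cases hseq hib.1 hib.2 hjb.1 hjb.2 (by omega) with ⟨e1, e2, _⟩ | ⟨e1, e2, _⟩ <;>
      omega
  have hpsumw : pOcc ι jj w + pOcc ι w jj = 1 := by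
    rcases pOcc_cases hseq hjb.1 hjb.2 hwb.1 hwb.2 (by omega) with ⟨e1, e2, _⟩ | ⟨e1, e2, _⟩ <;>
      omega
  -- the two gap filters inside (b⁻, b)
  have hafil : (Finset.Ioo (occPos ι jj t) (occPos ι jj (t+1))).filter (fun m => ι m = i)
      = {occPos ι i (Pfun n ι K r)} := by
    rw [show Pfun n ι K r = t + pOcc ι i jj by omega]
    exact gap_filter hn hA hseq had hjb.1 hjb.2 hib.1 hib.2 hadji ht1
  have hdfil : (Finset.Ioo (occPos ι jj t) (occPos ι jj (t+1))).filter (fun m => ι m = w)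
      = {occPos ι w (1 + Pfun n ι K (r-2))} := by
    rw [show 1 + Pfun n ι K (r-2) = t + pOcc ι w jj by omega]
    exact gap_filter hn hA hseq had hjb.1 hjb.2 hwb.1 hwb.2 hadjw ht1
  set a := occPos ι i (Pfun n ι K r) with hadef
  set d := occPos ι w (1 + Pfun n ι K (r-2)) with hddef
  set b := occPos ι jj (1 + t) with hbdef
  have hb' : occPos ι jj (t + 1) = b := by rw [hbdef, Nat.add_comm]
  have hab : occPos ι jj t < a ∧ a < b := by
    have : a ∈ (Finset.Ioo (occPos ι jj t) (occPos ι jj (t+1))).filter (fun m => ι m = i) := by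
      rw [hafil]; exact Finset.mem_singleton_self a
    have := (Finset.mem_filter.mp this).1
    have := Finset.mem_Ioo.mp this
    omega
  have hF : Fbox n ι lam k K r =
      ((lam k : ℚ), Finsupp.single a 1 - Finsupp.single b 1) := by
    rw [Fbox, xsj_pos ι _ (by omega), xsj_pos ι _ (by omega)]
  have hcoef : (Fbox n ι lam k K r).2 b = -1 := by
    rw [hF]
    simp only [Prod.snd]
    rw [sub_single_apply, if_neg (by omega), if_pos rfl]
    norm_num
  rw [ShatOp_neg (by rw [hcoef]; norm_num)]
  -- β̂⁻ at b
  have hrm : rMinus ι b = occPos ι jj t := by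
    rw [← hb', rMinus_occPos hinfj ht1]
  have hbm : betaMinusHat A ι lam b = ((0:ℚ), betaForm A ι (occPos ι jj t)) := by
    rw [betaMinusHat, if_pos]
    · rw [hrm]
    · rw [hrm]
      have := (occPos_spec hinfj t ht1).1
      omega
  have hF' : Fbox n ι lam k K (r-1) =
      ((lam k : ℚ), Finsupp.single (occPos ι jj t) 1 - Finsupp.single d 1) := by
    rw [Fbox, show r - 1 - 1 = r - 2 by omega, xsj_pos ι _ (by omega), xsj_pos ι _ (by omega)]
  rcases htri' with ⟨h1, h2, h3⟩ | ⟨h1, h2, h3⟩ | ⟨h1, h2, h3⟩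
  · -- jj = 1, w = i = 2
    have hwi : w = i := by omega
    rw [hwi] at hPprev
    have hda : d = a := by
      rw [hddef, hadef, hwi]
      congr 1
      omega
    have hbeta := betaForm_occ_one (A := A) hinfj ht1 hafil
      (fun m hm1 hm2 hmj hmi => by
        have hm1' : 1 ≤ m := by
          have := (occPos_spec hinfj t ht1).1; omega
        have hmb := hseq.1 m hm1'
        exact cartan_zero hA hjb.1 hjb.2 hmb.1 hmb.2 hmj (by omega) (by omega))
    have hAji : A jj i = -2 := by rw [h1, h3]; exact cartan_one hn hA
    rw [hb'] at hbeta
    rw [hF, hF', hbm, hbeta, hAji, hda]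
    apply Prod.ext
    · simp
    · simp only [Prod.mk_add_mk, Prod.snd]
      push_cast
      module
  · -- jj = n, w = i = n-1
    have hwi : w = i := by omega
    rw [hwi] at hPprev
    have hda : d = a := by
      rw [hddef, hadef, hwi]
      congr 1
      omega
    have hbeta := betaForm_occ_one (A := A) hinfj ht1 hafil
      (fun m hm1 hm2 hmj hmi => by
        have hm1' : 1 ≤ m := by
          have := (occPos_spec hinfj t ht1).1; omega
        have hmb := hseq.1 m hm1'
        exact cartan_zero hA hjb.1 hjb.2 hmb.1 hmb.2 hmj (by omega) (by omega))
    have hAji : A jj i = -2 := by rw [h1, h3]; exact cartan_n hn hA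
    rw [hb'] at hbeta
    rw [hF, hF', hbm, hbeta, hAji, hda]
    apply Prod.ext
    · simp
    · simp only [Prod.mk_add_mk, Prod.snd]
      push_cast
      module
  · -- jj interior
    have hiw_ne : i ≠ w := by rcases h3 with ⟨h4, h5⟩ | ⟨h4, h5⟩ <;> omega
    have hbeta := betaForm_occ_two (A := A) hinfj hiw_ne ht1 hafil hdfil
      (fun m hm1 hm2 hmj hmi hmw => by
        have hm1' : 1 ≤ m := by
          have := (occPos_spec hinfj t ht1).1; omega
        have hmb := hseq.1 m hm1'
        refine cartan_zero hA hjb.1 hjb.2 hmb.1 hmb.2 hmj ?_ ?_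
        · rcases h3 with ⟨h4, h5⟩ | ⟨h4, h5⟩ <;> omega
        · rcases h3 with ⟨h4, h5⟩ | ⟨h4, h5⟩ <;> omega)
    have hAji : A jj i = -1 := by
      rcases h3 with ⟨h4, h5⟩ | ⟨h4, h5⟩
      · rw [h5]; exact (cartan_interior hn hA h1 h2).2
      · rw [h5]; exact (cartan_interior hn hA h1 h2).1
    have hAjw : A jj w = -1 := by
      rcases h3 with ⟨h4, h5⟩ | ⟨h4, h5⟩
      · rw [h4]; exact (cartan_interior hn hA h1 h2).1
      · rw [h4]; exact (cartan_interior hn hA h1 h2).2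
    rw [hb'] at hbeta
    rw [hF, hF', hbm, hbeta, hAji, hAjw]
    apply Prod.ext
    · simp
    · simp only [Prod.mk_add_mk, Prod.snd]
      push_cast
      module

end MainLemmas2

theorem xiLamK_eq_boxes_D2 (n : ℕ) (hn : 3 ≤ n) (A : ℕ → ℕ → ℤ) (hA : CartanD2 n A)
    (ι : ℕ → ℕ) (hseq : SeqCon n ι) (had : Adapted n A ι)
    (k : ℕ) (hk1 : 1 < k) (hkn : k < n) (lam : ℕ → ℕ) (K : ℕ)
    (hK : (iotaFirst ι (k + 1) < iotaFirst ι k ∧ iotaFirst ι k < iotaFirst ι (k - 1) ∧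
            K = k) ∨
          (iotaFirst ι (k - 1) < iotaFirst ι k ∧ iotaFirst ι k < iotaFirst ι (k + 1) ∧
            K = 2 * n - k)) :
    (∀ φ : ℚ × (ℕ →₀ ℚ),
      XiLamKMem A ι lam k φ ↔ ((∃ r, K + 1 ≤ r ∧ φ = Fbox n ι lam k K r) ∨ φ = 0)) ∧
    lamForm A ι lam k = Fbox n ι lam k K (K + 1) := by
  obtain ⟨hK2, hKpi, -⟩ := K_struct hn hk1 hkn hK
  have hL1 := lamForm_eq_FboxK1 hn hA hseq had hk1 hkn lam hK
  constructor
  · intro φ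
    constructor
    · intro h
      induction h with
      | base => exact Or.inl ⟨K+1, le_rfl, hL1⟩
      | step r' hr' ψ hψ ih =>
          rcases ih with ⟨t, ht, rfl⟩ | rfl
          · by_cases e1 : r' = occPos ι (piC n t) (Pfun n ι K t)
            · subst e1
              rw [forward_shift hn hA hseq had hk1 hkn lam hK ht]
              exact Or.inl ⟨t+1, by omega, rfl⟩
            · by_cases e2 : r' = occPos ι (piC n (t-1)) (1 + Pfun n ι K (t-1))
              · subst e2
                rcases Nat.eq_or_lt_of_le ht with he | he
                · subst he
                  have hpos : occPos ι (piC n (K+1-1)) (1 + Pfun n ι K (K+1-1))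
                      = occPos ι k 1 := by
                    rw [show K + 1 - 1 = K by omega, hKpi, Pfun_base]
                  rw [hpos, Shat_base_zero hn hA hseq had hk1 hkn lam hK]
                  exact Or.inr rfl
                · rw [backward_shift hn hA hseq had hk1 hkn lam hK (by omega)]
                  exact Or.inl ⟨t-1, by omega, rfl⟩
              · rw [shat_noop hn hA hseq had hk1 hkn lam hK ht e1 e2]
                exact Or.inl ⟨t, ht, rfl⟩
          · rw [ShatOp_zero (by simp)]
            exact Or.inr rfl
    · rintro (⟨t, ht, rfl⟩ | rfl)
      · induction t, ht using Nat.le_induction with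
        | base =>
            rw [← hL1]
            exact XiLamKMem.base
        | succ t ht ih =>
            rw [← forward_shift hn hA hseq had hk1 hkn lam hK ht]
            refine XiLamKMem.step _ ?_ _ ih
            have hib := piC_bounds hn t
            exact (occPos_spec (hinf_of_seq hseq hib.1 hib.2) _
              (Pfun_pos hn hk1 hkn hK ht)).1
      · rw [← Shat_base_zero hn hA hseq had hk1 hkn lam hK]
        refine XiLamKMem.step _ ?_ _ ?_
        · exact (occPos_spec (hinf_of_seq hseq (by omega : 1 ≤ k) (by omega : k ≤ n))
            1 le_rfl).1
        · rw [← hL1]; exact XiLamKMem.base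
  · exact hL1


end
end

section
/- Fix n ≥ 4 and let D = ℤ_{≥1} ∪ {3/2 + (2n−4)z : z ∈ ℤ_{≥0}}, a subset of the half-integers. Let π : D → {1,…,n} be the map of period 2n−4 determined by π(1) = 1, π(3/2) = 2, π(ℓ) = ℓ+1 for 2 ≤ ℓ ≤ n−1, and π(2n−1−ℓ) = ℓ for 3 ≤ ℓ ≤ n−1. Let p assign to each ordered pair (i,j) of adjacent vertices of the Dynkin diagram of B^{(1)}_{n−1} (the pairs {1,3}, {2,3} and {i,i+1} for 3 ≤ i ≤ n−1) a value p_{i,j} ∈ {0,1} with p_{i,j} + p_{j,i} = 1. For ℓ ∈ D define P_ℓ : D → ℤ by: P_ℓ(t) = 0 if t ≤ ℓ and {ℓ,t} ≠ {1, 3/2}; P_{j₁}(j₂) = p_{3,π(j₁)} − p_{3,π(j₂)} if {j₁,j₂} = {1, 3/2}; and, for t ∈ D with t > ℓ and {ℓ,t} ≠ {1, 3/2}, P_ℓ(t) = P_ℓ(t − 3/2) + p_{2,3} if π(t) = 2, and P_ℓ(t) = P_ℓ(t − 1) + p_{π(t),π(t−1)} otherwise. Then P_ℓ(t) ≥ 0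 for all ℓ, t ∈ D with {ℓ,t} ≠ {1, 3/2}, and P_ℓ(t) ≥ −1 when {ℓ,t} = {1, 3/2}. -/
noncomputable section

/-- The domain `D = ℤ_{≥1} ∪ {3/2 + (2n−4)z : z ∈ ℤ_{≥0}}`, as a set of rationals. -/
def Dom (n : ℕ) : Set ℚ :=
  {t | (∃ m : ℕ, 1 ≤ m ∧ t = m) ∨ ∃ z : ℕ, t = 3 / 2 + (2 * (n : ℚ) - 4) * z}

/-- Adjacency in the Dynkin diagram of type `B^{(1)}_{n-1}`:
the pairs `{1,3}`, `{2,3}` and `{i,i+1}` for `3 ≤ i ≤ n−1`. -/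
def AdjB (n i j : ℕ) : Prop :=
  (i = 1 ∧ j = 3) ∨ (i = 3 ∧ j = 1) ∨ (i = 2 ∧ j = 3) ∨ (i = 3 ∧ j = 2) ∨
  (∃ m, 3 ≤ m ∧ m + 1 ≤ n ∧ ((i = m ∧ j = m + 1) ∨ (i = m + 1 ∧ j = m)))

/-- The exceptional pair `{ℓ,t} = {1, 3/2}`. -/
def ExcPair (ℓ t : ℚ) : Prop := (ℓ = 1 ∧ t = 3 / 2) ∨ (ℓ = 3 / 2 ∧ t = 1)

theorem P_nonneg_B1 (n : ℕ) (hn : 4 ≤ n)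
    (π : ℚ → ℕ) (p : ℕ → ℕ → ℤ) (P : ℚ → ℚ → ℤ)
    -- π is the map of period 2n−4 determined by the prescribed values:
    (hπper : ∀ t ∈ Dom n, π (t + (2 * (n : ℚ) - 4)) = π t)
    (hπ1 : π 1 = 1) (hπ32 : π (3 / 2) = 2)
    (hπmid : ∀ ℓ : ℕ, 2 ≤ ℓ → ℓ + 1 ≤ n → π (ℓ : ℚ) = ℓ + 1)
    (hπback : ∀ ℓ : ℕ, 3 ≤ ℓ → ℓ + 1 ≤ n → π (2 * (n : ℚ) - 1 - (ℓ : ℚ)) = ℓ)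
    -- p takes values in {0,1} on adjacent pairs, with p_{i,j} + p_{j,i} = 1:
    (hp : ∀ i j, AdjB n i j → (p i j = 0 ∨ p i j = 1) ∧ p i j + p j i = 1)
    -- the defining recursion for P_ℓ:
    (hP0 : ∀ ℓ ∈ Dom n, ∀ t ∈ Dom n, t ≤ ℓ → ¬ExcPair ℓ t → P ℓ t = 0)
    (hPexc : ∀ ℓ ∈ Dom n, ∀ t ∈ Dom n, ExcPair ℓ t →
      P ℓ t = p 3 (π ℓ) - p 3 (π t))
    (hPrec2 : ∀ ℓ ∈ Dom n, ∀ t ∈ Dom n, ℓ < t → ¬ExcPair ℓ t → π t = 2 →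
      P ℓ t = P ℓ (t - 3 / 2) + p 2 3)
    (hPrec : ∀ ℓ ∈ Dom n, ∀ t ∈ Dom n, ℓ < t → ¬ExcPair ℓ t → π t ≠ 2 →
      P ℓ t = P ℓ (t - 1) + p (π t) (π (t - 1))) :
    ∀ ℓ ∈ Dom n, ∀ t ∈ Dom n,
      (¬ExcPair ℓ t → 0 ≤ P ℓ t) ∧ (ExcPair ℓ t → -1 ≤ P ℓ t) := by
  have hN4 : (4:ℚ) ≤ 2*(n:ℚ) - 4 := by
    have : (4:ℚ) ≤ (n:ℚ) := by exact_mod_cast hn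
    linarith
  have hDomNat : ∀ m : ℕ, 1 ≤ m → (m:ℚ) ∈ Dom n := fun m hm => Or.inl ⟨m, hm, rfl⟩
  have hDomHalf : ∀ z : ℕ, (3/2 + (2*(n:ℚ)-4)*z) ∈ Dom n := fun z => Or.inr ⟨z, rfl⟩
  have hDomGe1 : ∀ t ∈ Dom n, (1:ℚ) ≤ t := by
    rintro t (⟨m, hm, rfl⟩ | ⟨z, rfl⟩)
    · exact_mod_cast hm
    · have hz : (0:ℚ) ≤ z := Nat.cast_nonneg z
      nlinarith
  have hpval : ∀ i j, AdjB n i j → 0 ≤ p i j ∧ p i j ≤ 1 := by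
    intro i j h
    obtain ⟨h01, _⟩ := hp i j h
    rcases h01 with h | h <;> simp [h]
  have adj31 : AdjB n 3 1 := Or.inr (Or.inl ⟨rfl, rfl⟩)
  have adj13 : AdjB n 1 3 := Or.inl ⟨rfl, rfl⟩
  have adj23 : AdjB n 2 3 := Or.inr (Or.inr (Or.inl ⟨rfl, rfl⟩))
  have adj32 : AdjB n 3 2 := Or.inr (Or.inr (Or.inr (Or.inl ⟨rfl, rfl⟩)))
  -- π at half-integer points is 2
  have hπhalf : ∀ z : ℕ, π (3/2 + (2*(n:ℚ)-4)*z) = 2 := by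
    intro z
    induction z with
    | zero => simpa using hπ32
    | succ z ih =>
      have e : (3/2 + (2*(n:ℚ)-4)*(z+1:ℕ)) = (3/2 + (2*(n:ℚ)-4)*z) + (2*(n:ℚ)-4) := by
        push_cast; ring
      rw [e, hπper _ (hDomHalf z), ih]
  -- π on integers ≥ 2: not 2, and adjacent to predecessor
  have hπint : ∀ m : ℕ, 2 ≤ m → π (m:ℚ) ≠ 2 ∧ AdjB n (π (m:ℚ)) (π ((m:ℚ) - 1)) := by
    intro m
    induction m using Nat.strong_induction_on with
    | _ m ih =>
      intro hm
      by_cases hbig : 2*n - 2 ≤ m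
      · -- reduce by one period
        set m' := m - (2*n-4) with hm'
        have hm'2 : 2 ≤ m' := by omega
        have hc4 : ((2*n-4:ℕ):ℚ) = 2*(n:ℚ) - 4 := by
          rw [Nat.cast_sub (by omega)]; push_cast; ring
        have hcast : ((m':ℕ):ℚ) = (m:ℚ) - (2*(n:ℚ) - 4) := by
          rw [hm', Nat.cast_sub (by omega), hc4]
        have e1 : (m:ℚ) = ((m':ℕ):ℚ) + (2*(n:ℚ) - 4) := by rw [hcast]; ring
        have e2 : (m:ℚ) - 1 = (((m'-1:ℕ)):ℚ) + (2*(n:ℚ) - 4) := by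
          rw [Nat.cast_sub (by omega : 1 ≤ m'), hcast]; push_cast; ring
        have p1 : π (m:ℚ) = π ((m':ℕ):ℚ) := by rw [e1, hπper _ (hDomNat m' (by omega))]
        have p2 : π ((m:ℚ) - 1) = π ((m':ℚ) - 1) := by
          rw [e2, hπper _ (hDomNat (m'-1) (by omega))]
          congr 1
          rw [Nat.cast_sub (by omega : 1 ≤ m')]
          push_cast; ring
        rw [p1, p2]
        exact ih m' (by omega) hm'2
      · -- m ≤ 2n-3 : use the table
        push_neg at hbig
        rcases Nat.lt_or_ge m 3 with h2 | h3
        · -- m = 2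
          have hm2 : m = 2 := by omega
          subst hm2
          have e2 : π ((2:ℕ):ℚ) = 3 := by
            have := hπmid 2 le_rfl (by omega)
            simpa using this
          have e1 : π (((2:ℕ):ℚ) - 1) = 1 := by norm_num [hπ1]
          rw [e2, e1] at *
          exact ⟨by norm_num, adj31⟩
        rcases Nat.lt_or_ge m n with hlt | hge
        · -- 3 ≤ m ≤ n-1
          have e2 : π (m:ℚ) = m+1 := hπmid m (by omega) (by omega)
          have e1 : π ((m:ℚ) - 1) = m := by
            have := hπmid (m-1) (by omega) (by omega)
            have ec : ((m-1:ℕ):ℚ) = (m:ℚ) - 1 := by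
              rw [Nat.cast_sub (by omega)]; norm_num
            rw [ec] at this
            rw [this]; omega
          rw [e2, e1]
          exact ⟨by omega, Or.inr (Or.inr (Or.inr (Or.inr ⟨m, by omega, by omega,
            Or.inr ⟨rfl, rfl⟩⟩)))⟩
        rcases Nat.lt_or_ge m (n+1) with hn1 | hgen1
        · -- m = n
          have hmn : m = n := by omega
          subst hmn
          have e2 : π (m:ℚ) = m - 1 := by
            have := hπback (m-1) (by omega) (by omega)
            have ec : 2*(m:ℚ) - 1 - ((m-1:ℕ):ℚ) = (m:ℚ) := by
              rw [Nat.cast_sub (by omega)]; push_cast; ring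
            rw [ec] at this; exact this
          have e1 : π ((m:ℚ) - 1) = m := by
            have := hπmid (m-1) (by omega) (by omega)
            have ec : ((m-1:ℕ):ℚ) = (m:ℚ) - 1 := by
              rw [Nat.cast_sub (by omega)]; norm_num
            rw [ec] at this
            rw [this]; omega
          rw [e2, e1]
          exact ⟨by omega, Or.inr (Or.inr (Or.inr (Or.inr ⟨m-1, by omega, by omega,
            Or.inl ⟨rfl, by omega⟩⟩)))⟩
        rcases Nat.lt_or_ge m (2*n-3) with hlt2 | hge2
        · -- n+1 ≤ m ≤ 2n-4
          have e2 : π (m:ℚ) = 2*n-1-m := by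
            have := hπback (2*n-1-m) (by omega) (by omega)
            have ec : 2*(n:ℚ) - 1 - ((2*n-1-m:ℕ):ℚ) = (m:ℚ) := by
              rw [Nat.cast_sub (by omega), Nat.cast_sub (by omega)]; push_cast; ring
            rw [ec] at this; exact this
          have e1 : π ((m:ℚ) - 1) = 2*n-m := by
            have := hπback (2*n-m) (by omega) (by omega)
            have ec : 2*(n:ℚ) - 1 - ((2*n-m:ℕ):ℚ) = (m:ℚ) - 1 := by
              rw [Nat.cast_sub (by omega)]; push_cast; ring
            rw [ec] at this; exact this
          rw [e2, e1]
          refine ⟨by omega, Or.inr (Or.inr (Or.inr (Or.inr ⟨2*n-1-m, by omega, by omega,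
            Or.inl ⟨rfl, by omega⟩⟩)))⟩
        · -- m = 2n-3
          have hm3 : m = 2*n-3 := by omega
          have e2 : π (m:ℚ) = 1 := by
            have h := hπper 1 (by simpa using hDomNat 1 le_rfl)
            rw [hπ1] at h
            have ec : (m:ℚ) = (1:ℚ) + (2*(n:ℚ) - 4) := by
              rw [hm3, Nat.cast_sub (by omega)]; push_cast; ring
            rw [ec]; exact h
          have e1 : π ((m:ℚ) - 1) = 3 := by
            have := hπback 3 le_rfl (by omega)
            have ec : 2*(n:ℚ) - 1 - ((3:ℕ):ℚ) = (m:ℚ) - 1 := by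
              rw [hm3, Nat.cast_sub (by omega)]; push_cast; ring
            rw [ec] at this
            simpa using this
          rw [e2, e1]
          exact ⟨by omega, adj13⟩
  have hc4 : ((2*n-4:ℕ):ℚ) = 2*(n:ℚ) - 4 := by
    rw [Nat.cast_sub (by omega)]; push_cast; ring
  -- main nonnegativity by strong induction on a natural bound for t
  have main : ∀ k : ℕ, ∀ ℓ ∈ Dom n, ∀ t ∈ Dom n, t ≤ (k:ℚ) → ¬ExcPair ℓ t → 0 ≤ P ℓ t := by
    intro k
    induction k using Nat.strong_induction_on with
    | _ k ih =>
      intro ℓ hℓ t ht htk hexc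
      rcases le_or_gt t ℓ with hle | hlt
      · rw [hP0 ℓ hℓ t ht hle hexc]
      have hℓ1 : (1:ℚ) ≤ ℓ := hDomGe1 ℓ hℓ
      rcases ht with ⟨m, hm1, rfl⟩ | ⟨z, rfl⟩
      · -- t is an integer m ≥ 2
        have hm2 : 2 ≤ m := by
          by_contra h
          have : m = 1 := by omega
          subst this
          simp at hlt
          linarith
        obtain ⟨hπne, hadj⟩ := hπint m hm2
        have hm1d : ((m-1:ℕ):ℚ) = (m:ℚ) - 1 := by
          rw [Nat.cast_sub (by omega)]; norm_num
        have hdom1 : ((m:ℚ) - 1) ∈ Dom n := by rw [← hm1d]; exact hDomNat _ (by omega)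
        have hrec := hPrec ℓ hℓ (m:ℚ) (hDomNat m hm1) hlt hexc hπne
        by_cases hexc' : ExcPair ℓ ((m:ℚ) - 1)
        · -- only possibility: ℓ = 3/2, m = 2
          rcases hexc' with ⟨h1, h2⟩ | ⟨h1, h2⟩
          · exfalso
            have : (2*(m-1:ℕ) : ℚ) = 3 := by rw [hm1d, h2]; ring
            have : (2*(m-1) : ℕ) = 3 := by exact_mod_cast this
            omega
          · have hm2' : m = 2 := by
              have : (m:ℚ) = 2 := by linarith
              exact_mod_cast this
            subst hm2'
            have hPe : P ℓ (((2:ℕ):ℚ) - 1) = p 3 2 - p 3 1 := by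
              have := hPexc ℓ hℓ (((2:ℕ):ℚ) - 1) hdom1 (Or.inr ⟨h1, h2⟩)
              rw [h1, h2] at this ⊢
              rw [this, hπ32]
              norm_num [hπ1]
            have hπ2 : π ((2:ℕ):ℚ) = 3 := by
              have := hπmid 2 le_rfl (by omega); simpa using this
            have hπ1' : π (((2:ℕ):ℚ) - 1) = 1 := by norm_num [hπ1]
            rw [hrec, hπ2, hπ1', hPe]
            have := (hpval 3 2 adj32).1
            linarith
        · -- inductive step
          have hkm : m ≤ k := by exact_mod_cast htk
          have hstep : ((m-1:ℕ):ℚ) ≤ ((k-1:ℕ):ℚ) := by exact_mod_cast (by omega : m-1 ≤ k-1)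
          rw [hm1d] at hstep
          have hIH := ih (k-1) (by omega) ℓ hℓ ((m:ℚ)-1) hdom1 hstep hexc'
          have hppos := (hpval _ _ hadj).1
          rw [hrec]
          linarith
      · -- t = 3/2 + (2n-4) z
        have hπt := hπhalf z
        rcases Nat.eq_zero_or_pos z with hz0 | hz1
        · -- z = 0 : exceptional pair, contradiction
          exfalso
          subst hz0
          simp only [Nat.cast_zero, mul_zero, add_zero] at hlt hexc
          have hℓeq : ℓ = 1 := by
            rcases hℓ with ⟨m', hm', rfl⟩ | ⟨z', rfl⟩
            · have : m' < 2 := by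
                by_contra h
                have : (2:ℚ) ≤ m' := by exact_mod_cast (by omega : 2 ≤ m')
                linarith
              have : m' = 1 := by omega
              subst this; norm_num
            · have hz' : (0:ℚ) ≤ z' := Nat.cast_nonneg z'
              nlinarith
          exact hexc (Or.inl ⟨hℓeq, rfl⟩)
        · -- z ≥ 1 : reduce by 3/2 to the integer (2n-4)z
          set M := (2*n-4)*z with hM
          have hM4 : 4 ≤ M := by
            have : 4 ≤ 2*n-4 := by omega
            calc 4 = 4*1 := by ring
            _ ≤ (2*n-4)*z := Nat.mul_le_mul this hz1
          have hMc : ((M:ℕ):ℚ) = (2*(n:ℚ)-4)*z := by rw [hM]; push_cast [hc4]; ring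
          have hsub : (3/2 + (2*(n:ℚ)-4)*z) - 3/2 = ((M:ℕ):ℚ) := by rw [hMc]; ring
          have hdomM : ((M:ℕ):ℚ) ∈ Dom n := hDomNat M (by omega)
          have hM4' : (4:ℚ) ≤ ((M:ℕ):ℚ) := by exact_mod_cast hM4
          have hexcM : ¬ExcPair ℓ ((M:ℕ):ℚ) := by
            rintro (⟨_, h2⟩ | ⟨_, h2⟩) <;> rw [h2] at hM4' <;> linarith
          have hrec := hPrec2 ℓ hℓ _ (hDomHalf z) hlt hexc hπt
          rw [hsub] at hrec
          have hk1 : (1:ℚ) ≤ k := le_trans (by linarith [hDomGe1 _ (hDomHalf z)]) htk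
          have hk1' : 1 ≤ k := by exact_mod_cast hk1
          have hstep : ((M:ℕ):ℚ) ≤ ((k-1:ℕ):ℚ) := by
            have : ((k-1:ℕ):ℚ) = (k:ℚ) - 1 := by
              rw [Nat.cast_sub hk1']; norm_num
            rw [this]
            linarith [htk, hsub.symm]
          have hIH := ih (k-1) (by omega) ℓ hℓ _ hdomM hstep hexcM
          have hppos := (hpval 2 3 adj23).1
          rw [hrec]
          linarith
  -- conclusion
  intro ℓ hℓ t ht
  constructor
  · intro hexc
    exact main ⌈t⌉₊ ℓ hℓ t ht (Nat.le_ceil t) hexc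
  · intro hexc
    have hPe := hPexc ℓ hℓ t ht hexc
    have h31 := hpval 3 1 adj31
    have h32 := hpval 3 2 adj32
    rcases hexc with ⟨h1, h2⟩ | ⟨h1, h2⟩ <;> subst h1 <;> subst h2 <;>
      rw [hPe, hπ1, hπ32] <;> omega

end
end
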